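/- arXiv:2005.06590 — 5 statements merged into one kernel-verified Lean document; each statement's English description precedes it below -/
import Mathlib

section
/- Let n ≥ 2, let U ⊆ ℝⁿ be a connected open set and let A ⊆ U be a set that is closed in U and whose Hausdorff dimension is strictly less than n − 1. Then U \ A is path-connected. -/
/-!
Let `p, q` be points of a convex open set `C ⊆ E` outside `A`, and let `H` be an affine
hyperplane meeting `C` and containing neither `p` nor `q`. Central projection from `p` onto `H`
is `C¹` on the open half-space bounded by the parallel hyperplane through `p` and containing `H`,
so the shadow of `A` on `H` seen from `p` (the points `z ∈ H` with `[p, z]` meeting `A`) has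
dimension at most `dimH A < dim E - 1`, while `C ∩ H` has dimension `dim E - 1`. Hence some
`z ∈ C ∩ H` lies in neither shadow, and `[p, z] ∪ [z, q]` is a path in `C \ A`. Applied to
small balls this makes `U \ A` path-connected near every point of `U`, and connectedness of `U`
propagates this to all of `U \ A`.
-/

open Set MeasureTheory Metric Module Filter Topology
open scoped ENNReal RealInnerProductSpace

def shadow {E : Type*} [AddCommGroup E] [Module ℝ E] (y : E) (A H : Set E) : Set E :=
  {z ∈ H | (A ∩ segment ℝ y z).Nonempty}

theorem IsConnected.isPathConnected_diff_of_nhds {X : Type*} [TopologicalSpace X] {U A : Set X}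
    (hU : IsConnected U) (hUo : IsOpen U)
    (hloc : ∀ x ∈ U, ∀ V ∈ 𝓝 x, ∃ N ∈ 𝓝 x, N ⊆ V ∧ IsPathConnected (N \ A)) :
    IsPathConnected (U \ A) := by
  -- `R` relates neighbourhoods rather than points, since points of `A` cannot be joined at all.
  let R : X → X → Prop := fun x y => ∃ N ∈ 𝓝 x, ∃ M ∈ 𝓝 y,
    ∀ a ∈ N \ A, ∀ b ∈ M \ A, JoinedIn (U \ A) a b
  have hlocal : ∀ x ∈ U, ∀ᶠ y in 𝓝[U] x, R x y := fun x hx => by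
    obtain ⟨N, hN, hNU, hNA⟩ := hloc x hx U (hUo.mem_nhds hx)
    filter_upwards [nhdsWithin_le_nhds (eventually_mem_nhds_iff.2 hN)] with y hy
    exact ⟨N, hN, N, hy, fun a ha b hb =>
      (hNA.joinedIn a ha b hb).mono (sdiff_subset_sdiff_left hNU)⟩
  have htrans : ∀ x y z, x ∈ U → y ∈ U → z ∈ U → R x y → R y z → R x z := by
    rintro x y z - hy - ⟨N₁, hN₁, M₁, hM₁, h₁⟩ ⟨N₂, hN₂, M₂, hM₂, h₂⟩
    obtain ⟨N, hN, hNsub, hNA⟩ := hloc y hy _ (inter_mem hM₁ hN₂)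
    obtain ⟨c, hcN, hcA⟩ := hNA.nonempty
    exact ⟨N₁, hN₁, M₂, hM₂, fun a ha b hb =>
      (h₁ a ha c ⟨(hNsub hcN).1, hcA⟩).trans (h₂ c ⟨(hNsub hcN).2, hcA⟩ b hb)⟩
  have hsymm : ∀ x y, x ∈ U → y ∈ U → R x y → R y x :=
    fun x y _ _ ⟨N, hN, M, hM, h⟩ => ⟨M, hM, N, hN, fun a ha b hb => (h b hb a ha).symm⟩
  obtain ⟨x₀, hx₀⟩ := hU.nonempty
  obtain ⟨N, -, hNU, hNA⟩ := hloc x₀ hx₀ U (hUo.mem_nhds hx₀)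
  refine isPathConnected_iff.2 ⟨hNA.nonempty.mono (sdiff_subset_sdiff_left hNU),
    fun x hx y hy => ?_⟩
  obtain ⟨N, hN, M, hM, h⟩ :=
    hU.isPreconnected.induction₂ R hlocal htrans hsymm hx.1 hy.1
  exact h x ⟨mem_of_mem_nhds hN, hx.2⟩ y ⟨mem_of_mem_nhds hM, hy.2⟩

section
variable {E : Type*} [NormedAddCommGroup E] [InnerProductSpace ℝ E] [FiniteDimensional ℝ E]

theorem dimH_shadow_hyperplane_le {A : Set E} {y : E} (hy : y ∉ A) {e : E} {c : ℝ}
    (hc : ⟪e, y⟫ ≠ c) : dimH (shadow y A {z | ⟪e, z⟫ = c}) ≤ dimH A := by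
  set h := c - ⟪e, y⟫
  have hh : h ≠ 0 := sub_ne_zero.2 hc.symm
  set Ω : Set E := {a | h * ⟪e, y⟫ < h * ⟪e, a⟫}
  have hΩ : Convex ℝ Ω := convex_halfSpace_gt
    ⟨fun a b => by simp only [inner_add_right]; ring,
      fun s a => by simp only [real_inner_smul_right, smul_eq_mul]; ring⟩ _
  have hne : ∀ a ∈ Ω, ⟪e, a - y⟫ ≠ 0 := fun a ha h0 => by
    rw [inner_sub_right, sub_eq_zero] at h0
    have ha' : h * ⟪e, y⟫ < h * ⟪e, a⟫ := ha
    exact (h0 ▸ ha').false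
  -- Central projection from `y` onto the hyperplane `⟪e, ·⟫ = c`.
  set φ : E → E := fun a => y + (h / ⟪e, a - y⟫) • (a - y)
  have hφ : ContDiffOn ℝ 1 φ Ω := by
    have hg : ContDiff ℝ 1 (fun a : E => ⟪e, a - y⟫) :=
      (innerSL ℝ e).contDiff.comp (contDiff_id.sub contDiff_const)
    exact contDiffOn_const.add ((contDiffOn_const.div hg.contDiffOn hne).smul
      (contDiff_id.sub contDiff_const).contDiffOn)
  have hsub : shadow y A {z | ⟪e, z⟫ = c} ⊆ φ '' (A ∩ Ω) := by
    rintro z ⟨hz, a, haA, haz⟩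
    rw [segment_eq_image'] at haz
    obtain ⟨u, ⟨hu0, -⟩, rfl⟩ := haz
    have hu : u ≠ 0 := by rintro rfl; simp [hy] at haA
    have hin : ⟪e, y + u • (z - y) - y⟫ = u * h := by
      rw [add_sub_cancel_left, real_inner_smul_right, inner_sub_right, hz]
    refine ⟨_, ⟨haA, ?_⟩, ?_⟩
    · have : 0 < h * ⟪e, y + u • (z - y) - y⟫ := by
        rw [hin]; nlinarith [mul_self_pos.2 hh, hu0.lt_of_ne' hu]
      rw [inner_sub_right, mul_sub, sub_pos] at this
      exact this
    · show y + (h / ⟪e, y + u • (z - y) - y⟫) • (y + u • (z - y) - y) = z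
      rw [hin, add_sub_cancel_left, smul_smul, show h / (u * h) * u = 1 by field_simp, one_smul,
        add_sub_cancel]
  calc dimH (shadow y A {z | ⟪e, z⟫ = c})
      ≤ dimH (φ '' (A ∩ Ω)) := dimH_mono hsub
    _ ≤ dimH (A ∩ Ω) := hφ.dimH_image_le hΩ inter_subset_right
    _ ≤ dimH A := dimH_mono inter_subset_left

theorem finrank_sub_one_le_dimH_inter_hyperplane {C : Set E} (hC : IsOpen C) {x : E}
    (hx : x ∈ C) {e : E} (he : e ≠ 0) :
    ((finrank ℝ E - 1 : ℕ) : ℝ≥0∞) ≤ dimH (C ∩ {z | ⟪e, z⟫ = ⟪e, x⟫}) := by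
  let ι : (ℝ ∙ e)ᗮ → E := fun v => x + v
  have hι : Isometry ι := Isometry.of_dist_eq fun v w => by simp [ι, dist_eq_norm]
  have hW : finrank ℝ (ℝ ∙ e)ᗮ = finrank ℝ E - 1 := by
    have := (ℝ ∙ e).finrank_add_finrank_orthogonal
    rw [finrank_span_singleton he] at this
    omega
  have hsub : ι '' (ι ⁻¹' C) ⊆ C ∩ {z | ⟪e, z⟫ = ⟪e, x⟫} := by
    rintro _ ⟨v, hv, rfl⟩
    refine ⟨hv, ?_⟩
    simp [ι, inner_add_right, Submodule.mem_orthogonal_singleton_iff_inner_right.1 v.2]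
  have hopen : ι ⁻¹' C ∈ 𝓝 0 :=
    (hC.preimage hι.continuous).mem_nhds (by simpa [ι] using hx)
  calc ((finrank ℝ E - 1 : ℕ) : ℝ≥0∞) = dimH (ι '' (ι ⁻¹' C)) := by
        rw [hι.dimH_image, Real.dimH_of_mem_nhds hopen, hW]
    _ ≤ _ := dimH_mono hsub

omit [FiniteDimensional ℝ E] in
theorem exists_inner_ne_ne_of_isOpen {C : Set E} (hC : IsOpen C) (hne : C.Nonempty) {e : E}
    (he : e ≠ 0) (a b : ℝ) : ∃ x ∈ C, ⟪e, x⟫ ≠ a ∧ ⟪e, x⟫ ≠ b := by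
  have hf : innerSL ℝ e ≠ 0 := by
    rw [← norm_ne_zero_iff, innerSL_apply_norm]; exact norm_ne_zero_iff.2 he
  obtain ⟨x, hx⟩ := hne
  have himg : innerSL ℝ e '' C ∈ 𝓝 ⟪e, x⟫ :=
    ((innerSL ℝ e).isOpenMap_of_ne_zero hf C hC).mem_nhds (mem_image_of_mem _ hx)
  obtain ⟨_, ⟨y, hy, rfl⟩, hyab⟩ :=
    ((infinite_of_mem_nhds _ himg).sdiff (toFinite {a, b})).nonempty
  simp only [mem_insert_iff, mem_singleton_iff, not_or] at hyab
  exact ⟨y, hy, hyab⟩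

theorem Convex.joinedIn_diff_of_dimH_lt {C A : Set E} (hC : Convex ℝ C) (hCo : IsOpen C)
    (hA : dimH A < ((finrank ℝ E - 1 : ℕ) : ℝ≥0∞)) {p q : E} (hp : p ∈ C \ A)
    (hq : q ∈ C \ A) : JoinedIn (C \ A) p q := by
  have : Nontrivial E := Module.nontrivial_of_finrank_pos (R := ℝ) (by
    have := pos_of_gt hA; norm_cast at this; omega)
  obtain ⟨e, he⟩ := exists_ne (0 : E)
  obtain ⟨x, hx, hxp, hxq⟩ :=
    exists_inner_ne_ne_of_isOpen hCo ⟨p, hp.1⟩ he ⟪e, p⟫ ⟪e, q⟫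
  set H := {z | ⟪e, z⟫ = ⟪e, x⟫}
  have hshadow : ¬ C ∩ H ⊆ shadow p A H ∪ shadow q A H := fun hsub => by
    have := (finrank_sub_one_le_dimH_inter_hyperplane hCo hx he).trans (dimH_mono hsub)
    rw [dimH_union] at this
    exact hA.not_ge (this.trans (max_le (dimH_shadow_hyperplane_le hp.2 hxp.symm)
      (dimH_shadow_hyperplane_le hq.2 hxq.symm)))
  obtain ⟨z, ⟨hzC, hzH⟩, hz⟩ := not_subset.1 hshadow
  have hseg : ∀ y ∈ C \ A, z ∉ shadow y A H → JoinedIn (C \ A) y z := fun y hy hzy =>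
    JoinedIn.of_segment_subset fun w hw =>
      ⟨hC.segment_subset hy.1 hzC hw, fun hwA => hzy ⟨hzH, w, hwA, hw⟩⟩
  exact (hseg p hp fun h => hz (.inl h)).trans (hseg q hq fun h => hz (.inr h)).symm

theorem Convex.isPathConnected_diff_of_dimH_lt {C A : Set E} (hC : Convex ℝ C) (hCo : IsOpen C)
    (hne : C.Nonempty) (hA : dimH A < ((finrank ℝ E - 1 : ℕ) : ℝ≥0∞)) :
    IsPathConnected (C \ A) := by
  have hdense : Dense Aᶜ := dense_compl_of_dimH_lt_finrank (hA.trans_le (by norm_cast; omega))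
  exact isPathConnected_iff.2 ⟨hdense.inter_open_nonempty C hCo hne,
    fun p hp q hq => hC.joinedIn_diff_of_dimH_lt hCo hA hp hq⟩

theorem IsConnected.isPathConnected_diff_of_dimH_lt {U A : Set E} (hU : IsConnected U)
    (hUo : IsOpen U) (hA : dimH A < ((finrank ℝ E - 1 : ℕ) : ℝ≥0∞)) :
    IsPathConnected (U \ A) :=
  hU.isPathConnected_diff_of_nhds hUo fun x _ V hV => by
    obtain ⟨r, hr, hrV⟩ := Metric.mem_nhds_iff.1 hV
    exact ⟨ball x r, ball_mem_nhds x hr, hrV,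
      (convex_ball x r).isPathConnected_diff_of_dimH_lt isOpen_ball ⟨x, mem_ball_self hr⟩ hA⟩

end

theorem compl_of_small_dimH_pathConnected_general (n : ℕ)
    (U : Set (EuclideanSpace ℝ (Fin n))) (hU : IsOpen U) (hUc : IsConnected U)
    (A : Set (EuclideanSpace ℝ (Fin n)))
    (hdim : dimH A < (↑(n - 1) : ℝ≥0∞)) :
    IsPathConnected (U \ A) :=
  hUc.isPathConnected_diff_of_dimH_lt hU (by rwa [finrank_euclideanSpace_fin])

/-- If `U ⊆ ℝⁿ` (`n ≥ 2`) is a connected open set and `A ⊆ U` is closed in `U`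
with Hausdorff dimension strictly less than `n - 1`, then `U \ A` is path-connected. -/
theorem compl_of_small_dimH_pathConnected (n : ℕ) (hn : 2 ≤ n)
    (U : Set (EuclideanSpace ℝ (Fin n))) (hU : IsOpen U) (hUc : IsConnected U)
    (A : Set (EuclideanSpace ℝ (Fin n))) (hAU : A ⊆ U)
    (hAclosed : IsClosed ((↑·) ⁻¹' A : Set U))
    (hdim : dimH A < (↑(n - 1) : ℝ≥0∞)) :
    IsPathConnected (U \ A) :=
  compl_of_small_dimH_pathConnected_general n U hU hUc A hdim
end

section
/- Let n ≥ 2, let A ⊆ ℝⁿ be a closed set whose Hausdorff dimension is strictly less than n − 1, and let U ⊆ ℝⁿ be an open convex set. Then any two points q, q̃ ∈ U \ A can be joined by a continuous path contained in U \ A; in particular U \ A is path-connected. -/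
open Set MeasureTheory
open scoped ENNReal

/-!
Fix `q' ∉ A` and a point `q ≠ q'`. Project `A` centrally from `q'` onto the hyperplane through
`q` orthogonal to `q - q'`; on the open half-space containing that hyperplane the projection is
`C¹`, so the image of `A` has Hausdorff dimension `< n - 1`, and it cannot cover any small
`(n - 1)`-dimensional disc of the hyperplane around `q`. For a point `z` of the disc outside the
image, the segment `[q', z]` misses `A`, and `q → z → q'` along two segments is the path.
-/

open Metric Module
open scoped RealInnerProductSpace

variable {E : Type*} [NormedAddCommGroup E] [InnerProductSpace ℝ E]

/-- The central projection from `p` onto the affine hyperplane `{y | ⟪v, y - p⟫ = c}`. -/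
noncomputable def centralProjection (p v : E) (c : ℝ) (x : E) : E :=
  p + (c / ⟪v, x - p⟫) • (x - p)

theorem convex_inner_sub_pos (p v : E) : Convex ℝ {x : E | 0 < ⟪v, x - p⟫} := by
  simp_rw [inner_sub_right, sub_pos]
  exact convex_halfSpace_gt (innerₛₗ ℝ v).isLinear _

theorem contDiffOn_centralProjection (p v : E) (c : ℝ) {k : WithTop ℕ∞} :
    ContDiffOn ℝ k (centralProjection p v c) {x | 0 < ⟪v, x - p⟫} := by
  have hsub : ContDiff ℝ k (fun x : E => x - p) := contDiff_id.sub contDiff_const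
  refine contDiffOn_const.add (ContDiffOn.smul ?_ hsub.contDiffOn)
  exact contDiffOn_const.div ((innerSL ℝ v).contDiff.comp hsub).contDiffOn fun x hx => hx.ne'

theorem centralProjection_add_smul {p v z : E} {c θ : ℝ} (hz : ⟪v, z - p⟫ = c) (hc : c ≠ 0)
    (hθ : θ ≠ 0) : centralProjection p v c (p + θ • (z - p)) = z := by
  simp only [centralProjection, add_sub_cancel_left, inner_smul_right, hz, smul_smul]
  rw [div_mul_cancel_right₀ hc, inv_mul_cancel₀ hθ, one_smul, add_sub_cancel]

variable [FiniteDimensional ℝ E]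

theorem finrank_sub_one_le_dimH_ball_inter_hyperplane {v : E} (hv : v ≠ 0) (q : E) {r : ℝ}
    (hr : 0 < r) : ((finrank ℝ E - 1 : ℕ) : ℝ≥0∞) ≤ dimH (ball q r ∩ {z | ⟪v, z - q⟫ = 0}) := by
  have hK : finrank ℝ (ℝ ∙ v)ᗮ = finrank ℝ E - 1 := by
    have := (ℝ ∙ v).finrank_add_finrank_orthogonal
    rw [finrank_span_singleton hv] at this
    omega
  have hiso : Isometry fun w : (ℝ ∙ v)ᗮ => q + (w : E) :=
    (IsometryEquiv.addLeft q).isometry.comp isometry_subtype_coe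
  calc ((finrank ℝ E - 1 : ℕ) : ℝ≥0∞) = dimH ((fun w : (ℝ ∙ v)ᗮ => q + (w : E)) '' ball 0 r) := by
        rw [hiso.dimH_image, Real.dimH_of_mem_nhds (ball_mem_nhds 0 hr), hK]
    _ ≤ _ := by
      refine dimH_mono ?_
      rintro _ ⟨w, hw, rfl⟩
      refine ⟨by simpa using hw, ?_⟩
      simpa using (Submodule.mem_orthogonal_singleton_iff_inner_right).mp w.2

theorem exists_mem_ball_disjoint_segment_of_dimH_lt {A : Set E}
    (hA : dimH A < ((finrank ℝ E - 1 : ℕ) : ℝ≥0∞)) {p q : E} (hp : p ∉ A) (hq : q ≠ p) {r : ℝ}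
    (hr : 0 < r) : ∃ z ∈ ball q r, Disjoint (segment ℝ p z) A := by
  set v := q - p
  have hv : v ≠ 0 := sub_ne_zero.mpr hq
  have hc : ‖v‖ ^ 2 ≠ 0 := by positivity
  set H := ball q r ∩ {z | ⟪v, z - q⟫ = 0}
  set Ω := {x : E | 0 < ⟪v, x - p⟫}
  by_contra! hmeet
  have hH : H ⊆ centralProjection p v (‖v‖ ^ 2) '' (A ∩ Ω) := by
    rintro z ⟨hzr, hzH⟩
    have hz : ⟪v, z - p⟫ = ‖v‖ ^ 2 := by
      rw [← sub_add_sub_cancel z q p, inner_add_right, show ⟪v, z - q⟫ = 0 from hzH, zero_add,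
        real_inner_self_eq_norm_sq]
    obtain ⟨_, hseg, haA⟩ := not_disjoint_iff.mp (hmeet z hzr)
    rw [segment_eq_image'] at hseg
    obtain ⟨θ, hθ, rfl⟩ := hseg
    have hθ0 : θ ≠ 0 := by rintro rfl; exact hp (by simpa using haA)
    refine ⟨_, ⟨haA, ?_⟩, centralProjection_add_smul hz hc hθ0⟩
    show 0 < ⟪v, p + θ • (z - p) - p⟫
    rw [add_sub_cancel_left, inner_smul_right, hz]
    exact mul_pos (hθ.1.lt_of_ne' hθ0) (by positivity)
  have := calc ((finrank ℝ E - 1 : ℕ) : ℝ≥0∞) ≤ dimH H :=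
        finrank_sub_one_le_dimH_ball_inter_hyperplane hv q hr
    _ ≤ dimH (A ∩ Ω) := (dimH_mono hH).trans <|
        (contDiffOn_centralProjection p v _).dimH_image_le (convex_inner_sub_pos p v)
          inter_subset_right
    _ ≤ dimH A := dimH_mono inter_subset_left
  exact (this.trans_lt hA).false

theorem joinedIn_compl_of_small_dimH_general (n : ℕ)
    (A : Set (EuclideanSpace ℝ (Fin n))) (hA : IsClosed A)
    (hdim : dimH A < (↑(n - 1) : ℝ≥0∞))
    (U : Set (EuclideanSpace ℝ (Fin n))) (hU : IsOpen U) (hUconv : Convex ℝ U) :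
    ∀ q ∈ U \ A, ∀ q' ∈ U \ A, JoinedIn (U \ A) q q' := by
  intro q hq q' hq'
  rcases eq_or_ne q q' with rfl | hne
  · exact JoinedIn.refl hq
  obtain ⟨r, hr, hball⟩ := isOpen_iff.mp (hU.sdiff hA) q hq
  obtain ⟨z, hz, hdisj⟩ := exists_mem_ball_disjoint_segment_of_dimH_lt
    (by rwa [finrank_euclideanSpace_fin]) hq'.2 hne hr
  have hqz : segment ℝ q z ⊆ U \ A :=
    ((convex_ball q r).segment_subset (mem_ball_self hr) hz).trans hball
  have hzq' : segment ℝ z q' ⊆ U \ A := by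
    rw [segment_symm]
    exact subset_sdiff.mpr ⟨hUconv.segment_subset hq'.1 (hball hz).1, hdisj⟩
  exact (JoinedIn.of_segment_subset hqz).trans (JoinedIn.of_segment_subset hzq')

/-- If `A ⊆ ℝⁿ` (`n ≥ 2`) is closed with Hausdorff dimension strictly less than
`n - 1` and `U ⊆ ℝⁿ` is open and convex, then any two points of `U \ A` can be
joined by a continuous path inside `U \ A`; in particular `U \ A` is path-connected. -/
theorem joinedIn_compl_of_small_dimH (n : ℕ) (hn : 2 ≤ n)
    (A : Set (EuclideanSpace ℝ (Fin n))) (hA : IsClosed A)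
    (hdim : dimH A < (↑(n - 1) : ℝ≥0∞))
    (U : Set (EuclideanSpace ℝ (Fin n))) (hU : IsOpen U) (hUconv : Convex ℝ U) :
    ∀ q ∈ U \ A, ∀ q' ∈ U \ A, JoinedIn (U \ A) q q' :=
  joinedIn_compl_of_small_dimH_general n A hA hdim U hU hUconv
end

section
/- Let U ⊆ ℝ³ be an open set and let X be a weak Beltrami field on U whose proportionality function λ is C∞-bounded near the zero set K = {p ∈ U : X(p) = 0}. Let p ∈ U be a zero of X of finite order m ≥ 1 and let β be any multi-index with |β| = m − 1. Then curl(∂^β X)(p) = 0; equivalently, the Jacobian matrix (∂ᵢ ∂^β X^j(p))_{i,j} of the vector field ∂^β X at p is symmetric. -/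
open Set MeasureTheory

noncomputable section

abbrev E3 : Type := EuclideanSpace ℝ (Fin 3)

/-- Partial derivative `∂ᵢ f` (Euclidean direction `i`). -/
noncomputable def pd (i : Fin 3) (f : E3 → ℝ) : E3 → ℝ :=
  fun x => fderiv ℝ f x (EuclideanSpace.single i 1)

/-- Divergence `div X = ∂₁X¹ + ∂₂X² + ∂₃X³` of a vector field on `ℝ³`. -/
noncomputable def vdiv (X : E3 → E3) : E3 → ℝ :=
  fun x => pd 0 (fun y => X y 0) x + pd 1 (fun y => X y 1) x + pd 2 (fun y => X y 2) x

/-- Curl `(∂₂X³ − ∂₃X², ∂₃X¹ − ∂₁X³, ∂₁X² − ∂₂X¹)` of a vector field on `ℝ³`. -/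
noncomputable def vcurl (X : E3 → E3) : E3 → Fin 3 → ℝ :=
  fun x => ![pd 1 (fun y => X y 2) x - pd 2 (fun y => X y 1) x,
             pd 2 (fun y => X y 0) x - pd 0 (fun y => X y 2) x,
             pd 0 (fun y => X y 1) x - pd 1 (fun y => X y 0) x]

/-- `lam` is locally bounded on `U`. -/
def LocallyBoundedOn (lam : E3 → ℝ) (U : Set E3) : Prop :=
  ∀ p ∈ U, ∃ V ∈ nhds p, ∃ C : ℝ, ∀ x ∈ V ∩ U, |lam x| ≤ C

/-- `X` is a weak Beltrami field on `U` with (locally bounded) proportionality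
function `lam`:  `X` is smooth on `U`, `curl X = lam • X` and `div X = 0` on `U`. -/
def IsWeakBeltrami (X : E3 → E3) (lam : E3 → ℝ) (U : Set E3) : Prop :=
  ContDiffOn ℝ (⊤ : ℕ∞) X U ∧ LocallyBoundedOn lam U ∧
    (∀ x ∈ U, ∀ i, vcurl X x i = lam x * X x i) ∧ (∀ x ∈ U, vdiv X x = 0)

/-- Iterated partial derivative `∂^β` for a multi-index `β`. -/
noncomputable def mderiv (β : Fin 3 → ℕ) (f : E3 → ℝ) : E3 → ℝ :=
  (pd 0)^[β 0] ((pd 1)^[β 1] ((pd 2)^[β 2] f))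

/-- `lam` is `C^∞`-bounded near `K` (inside `U`): every point of `K` has a
neighbourhood `V ⊆ U` on which all partial derivatives of `lam` are bounded on `V \ K`. -/
def CInftyBoundedNear (lam : E3 → ℝ) (U K : Set E3) : Prop :=
  ∀ p ∈ K, ∃ V ∈ nhds p, V ⊆ U ∧
    ∀ α : Fin 3 → ℕ, ∃ C : ℝ, ∀ x ∈ V \ K, |mderiv α lam x| ≤ C

/-- The length `|β| = β₀ + β₁ + β₂` of a multi-index. -/
def msize (β : Fin 3 → ℕ) : ℕ := β 0 + β 1 + β 2

/-- `p` is a zero of `X` of (finite) order `m`: all partial derivatives of order `< m` of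
all components of `X` vanish at `p`, while some partial derivative of order `m` of some
component does not. -/
def ZeroOfOrder (X : E3 → E3) (p : E3) (m : ℕ) : Prop :=
  (∀ β : Fin 3 → ℕ, msize β < m → ∀ j : Fin 3, mderiv β (fun y => X y j) p = 0) ∧
  (∃ β : Fin 3 → ℕ, msize β = m ∧ ∃ j : Fin 3, mderiv β (fun y => X y j) p ≠ 0)

/-- The vector field `∂^β X` with components `(∂^β X¹, ∂^β X², ∂^β X³)`. -/
noncomputable def mderivVF (β : Fin 3 → ℕ) (X : E3 → E3) : E3 → E3 :=
  fun x => (WithLp.toLp 2 (fun j => mderiv β (fun y => X y j) x) : EuclideanSpace ℝ (Fin 3))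

section basic
open ContDiff

variable {f g : E3 → ℝ} {s : Set E3} {x : E3} {i j : Fin 3} {n : ℕ}

lemma two_le_infty : (2 : WithTop ℕ∞) ≤ ∞ := by
  rw [show ((2:WithTop ℕ∞)) = ((2:ℕ∞) : WithTop ℕ∞) by norm_cast]
  exact WithTop.coe_le_coe.mpr le_top

lemma one_add_one_le_infty : ((1:WithTop ℕ∞)+1) ≤ ∞ := by
  rw [show ((1:WithTop ℕ∞)+1) = ((2:ℕ∞) : WithTop ℕ∞) by norm_cast]
  exact WithTop.coe_le_coe.mpr le_top

lemma pd_contDiffOn (hs : IsOpen s) (hf : ContDiffOn ℝ ∞ f s) :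
    ContDiffOn ℝ ∞ (pd i f) s := by
  have h1 : ContDiffOn ℝ ∞ (fderiv ℝ f) s :=
    hf.fderiv_of_isOpen hs (le_of_eq rfl)
  exact (ContinuousLinearMap.apply ℝ ℝ (EuclideanSpace.single i 1)).contDiff.comp_contDiffOn h1

lemma pd_iter_contDiffOn (hs : IsOpen s) (hf : ContDiffOn ℝ ∞ f s) :
    ContDiffOn ℝ ∞ ((pd i)^[n] f) s := by
  induction n generalizing f with
  | zero => exact hf
  | succ n ih => rw [Function.iterate_succ_apply]; exact ih (pd_contDiffOn hs hf)

lemma mderiv_contDiffOn (β : Fin 3 → ℕ) (hs : IsOpen s) (hf : ContDiffOn ℝ ∞ f s) :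
    ContDiffOn ℝ ∞ (mderiv β f) s :=
  pd_iter_contDiffOn hs (pd_iter_contDiffOn hs (pd_iter_contDiffOn hs hf))

lemma pd_congr_nhds (h : f =ᶠ[nhds x] g) : pd i f x = pd i g x := by
  simp only [pd, h.fderiv_eq]

lemma pd_congr_on (hs : IsOpen s) (h : EqOn f g s) : EqOn (pd i f) (pd i g) s := by
  intro x hx
  exact pd_congr_nhds ((hs.eventually_mem hx).mono (fun y hy => h hy))

lemma pd_iter_congr_on (hs : IsOpen s) (h : EqOn f g s) :
    EqOn ((pd i)^[n] f) ((pd i)^[n] g) s := by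
  induction n generalizing f g with
  | zero => exact h
  | succ n ih => rw [Function.iterate_succ_apply, Function.iterate_succ_apply]
                 exact ih (pd_congr_on hs h)

lemma mderiv_congr_on (β : Fin 3 → ℕ) (hs : IsOpen s) (h : EqOn f g s) :
    EqOn (mderiv β f) (mderiv β g) s :=
  pd_iter_congr_on hs (pd_iter_congr_on hs (pd_iter_congr_on hs h))

lemma pd_zero_fun : pd i (fun _ => (0:ℝ)) = fun _ => (0:ℝ) := by
  funext x; simp [pd]

lemma mderiv_zero_fun (β : Fin 3 → ℕ) : mderiv β (fun _ => (0:ℝ)) = fun _ => (0:ℝ) := by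
  simp only [mderiv, Function.iterate_fixed pd_zero_fun]

lemma pd_comm (hs : IsOpen s) (hf : ContDiffOn ℝ ∞ f s) (hx : x ∈ s) :
    pd i (pd j f) x = pd j (pd i f) x := by
  have hfa : ContDiffAt ℝ ∞ f x := hf.contDiffAt (hs.mem_nhds hx)
  have hsym := hfa.isSymmSndFDerivAt (n := ∞) (by rw [minSmoothness_of_isRCLikeNormedField]; exact two_le_infty)
  have hd : DifferentiableAt ℝ (fderiv ℝ f) x := by
    have := hfa.fderiv_right (m := 1) one_add_one_le_infty
    exact this.differentiableAt (by norm_num)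
  have key : ∀ a b : Fin 3, pd a (pd b f) x =
      fderiv ℝ (fderiv ℝ f) x (EuclideanSpace.single a 1) (EuclideanSpace.single b 1) := by
    intro a b
    have hu : pd b f = fun y => (fderiv ℝ f y) (EuclideanSpace.single b 1) := rfl
    rw [pd, hu, fderiv_clm_apply hd (differentiableAt_const (EuclideanSpace.single b (1:ℝ)))]
    simp
  rw [key, key, hsym.eq]
end basic

section layer2
open ContDiff
variable {f g : E3 → ℝ} {s : Set E3} {x : E3} {i j a : Fin 3} {n : ℕ}

lemma diffAt_of_contDiffOn (hs : IsOpen s) (hf : ContDiffOn ℝ ∞ f s) (hx : x ∈ s) :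
    DifferentiableAt ℝ f x :=
  (hf.contDiffAt (hs.mem_nhds hx)).differentiableAt (by norm_num)

lemma pd_comm_iter (hs : IsOpen s) (hf : ContDiffOn ℝ ∞ f s) :
    ∀ x ∈ s, pd a ((pd i)^[n] f) x = (pd i)^[n] (pd a f) x := by
  induction n generalizing f with
  | zero => intro x _; rfl
  | succ n ih =>
    intro x hx
    rw [Function.iterate_succ_apply, Function.iterate_succ_apply]
    rw [ih (pd_contDiffOn hs hf) x hx]
    exact pd_iter_congr_on hs (fun y hy => pd_comm hs hf hy) hx

lemma pd_mderiv_comm (β : Fin 3 → ℕ) (hs : IsOpen s) (hf : ContDiffOn ℝ ∞ f s) (hx : x ∈ s) :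
    pd a (mderiv β f) x = mderiv β (pd a f) x := by
  unfold mderiv
  rw [pd_comm_iter hs (pd_iter_contDiffOn hs (pd_iter_contDiffOn hs hf)) x hx]
  refine pd_iter_congr_on hs (fun y hy => ?_) hx
  rw [pd_comm_iter hs (pd_iter_contDiffOn hs hf) y hy]
  exact pd_iter_congr_on hs (fun z hz => pd_comm_iter hs hf z hz) hy

lemma msize_add_single (β : Fin 3 → ℕ) (i : Fin 3) :
    msize (β + Pi.single i 1) = msize β + 1 := by
  fin_cases i <;> simp [msize, Pi.single, Function.update] <;> ring

lemma mderiv_add_single0 (β : Fin 3 → ℕ) (hs : IsOpen s) (hf : ContDiffOn ℝ ∞ f s) (hx : x ∈ s) :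
    mderiv (β + Pi.single 0 1) f x = pd 0 (mderiv β f) x := by
  rw [pd_mderiv_comm β hs hf hx]
  unfold mderiv
  have h0 : (β + Pi.single (0:Fin 3) 1 : Fin 3 → ℕ) 0 = β 0 + 1 := by simp
  have h1 : (β + Pi.single (0:Fin 3) 1 : Fin 3 → ℕ) 1 = β 1 := by
    simp [Pi.single, Function.update]
  have h2 : (β + Pi.single (0:Fin 3) 1 : Fin 3 → ℕ) 2 = β 2 := by
    simp [Pi.single, Function.update]
  rw [h0, h1, h2, Function.iterate_succ_apply]
  refine pd_iter_congr_on hs (fun y hy => ?_) hx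
  rw [pd_comm_iter hs (pd_iter_contDiffOn hs hf) y hy]
  exact pd_iter_congr_on hs (fun z hz => pd_comm_iter hs hf z hz) hy

lemma mderiv_add_single1 (β : Fin 3 → ℕ) (hs : IsOpen s) (hf : ContDiffOn ℝ ∞ f s) (hx : x ∈ s) :
    mderiv (β + Pi.single 1 1) f x = pd 1 (mderiv β f) x := by
  rw [pd_mderiv_comm β hs hf hx]
  unfold mderiv
  have h0 : (β + Pi.single (1:Fin 3) 1 : Fin 3 → ℕ) 0 = β 0 := by
    simp [Pi.single, Function.update]
  have h1 : (β + Pi.single (1:Fin 3) 1 : Fin 3 → ℕ) 1 = β 1 + 1 := by simp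
  have h2 : (β + Pi.single (1:Fin 3) 1 : Fin 3 → ℕ) 2 = β 2 := by
    simp [Pi.single, Function.update]
  rw [h0, h1, h2, Function.iterate_succ_apply]
  refine pd_iter_congr_on hs (fun y hy => ?_) hx
  refine pd_iter_congr_on hs (fun z hz => ?_) hy
  exact pd_comm_iter hs hf z hz

lemma mderiv_add_single2 (β : Fin 3 → ℕ) (hs : IsOpen s) (hf : ContDiffOn ℝ ∞ f s) (hx : x ∈ s) :
    mderiv (β + Pi.single 2 1) f x = pd 2 (mderiv β f) x := by
  rw [pd_mderiv_comm β hs hf hx]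
  unfold mderiv
  have h0 : (β + Pi.single (2:Fin 3) 1 : Fin 3 → ℕ) 0 = β 0 := by
    simp [Pi.single, Function.update]
  have h1 : (β + Pi.single (2:Fin 3) 1 : Fin 3 → ℕ) 1 = β 1 := by
    simp [Pi.single, Function.update]
  have h2 : (β + Pi.single (2:Fin 3) 1 : Fin 3 → ℕ) 2 = β 2 + 1 := by simp
  rw [h0, h1, h2, Function.iterate_succ_apply]

lemma mderiv_add_single (β : Fin 3 → ℕ) {i : Fin 3} (hs : IsOpen s) (hf : ContDiffOn ℝ ∞ f s)
    (hx : x ∈ s) : mderiv (β + Pi.single i 1) f x = pd i (mderiv β f) x := by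
  fin_cases i
  · exact mderiv_add_single0 β hs hf hx
  · exact mderiv_add_single1 β hs hf hx
  · exact mderiv_add_single2 β hs hf hx

lemma exists_decomp (β : Fin 3 → ℕ) (h : msize β ≠ 0) :
    ∃ i γ, β = γ + Pi.single i 1 ∧ msize γ + 1 = msize β := by
  have : ∃ i, β i ≠ 0 := by
    by_contra hc
    push_neg at hc
    exact h (by simp [msize, hc 0, hc 1, hc 2])
  obtain ⟨i, hi⟩ := this
  refine ⟨i, Function.update β i (β i - 1), ?_, ?_⟩
  · funext j
    by_cases hj : j = i
    · subst hj; simp [Nat.sub_add_cancel (Nat.one_le_iff_ne_zero.mpr hi)]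
    · simp [Function.update, hj, Pi.single, hj]
  · have := msize_add_single (Function.update β i (β i - 1)) i
    rw [show Function.update β i (β i - 1) + Pi.single i 1 = β by
      funext j
      by_cases hj : j = i
      · subst hj; simp [Nat.sub_add_cancel (Nat.one_le_iff_ne_zero.mpr hi)]
      · simp [Function.update, hj, Pi.single, hj]] at this
    omega

lemma pd_sub (hf : DifferentiableAt ℝ f x) (hg : DifferentiableAt ℝ g x) :
    pd i (fun y => f y - g y) x = pd i f x - pd i g x := by
  simp [pd, fderiv_fun_sub hf hg]

lemma pd_mul (hf : DifferentiableAt ℝ f x) (hg : DifferentiableAt ℝ g x) :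
    pd i (fun y => f y * g y) x = pd i f x * g x + f x * pd i g x := by
  simp [pd, fderiv_fun_mul hf hg]; ring

lemma pd_const_mul (c : ℝ) (hf : DifferentiableAt ℝ f x) :
    pd i (fun y => c * f y) x = c * pd i f x := by
  simp [pd, fderiv_const_mul hf c]

lemma mderiv_sub (β : Fin 3 → ℕ) (hs : IsOpen s) (hf : ContDiffOn ℝ ∞ f s)
    (hg : ContDiffOn ℝ ∞ g s) (hx : x ∈ s) :
    mderiv β (fun y => f y - g y) x = mderiv β f x - mderiv β g x := by
  suffices H : ∀ n (β : Fin 3 → ℕ), msize β = n → ∀ x ∈ s,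
      mderiv β (fun y => f y - g y) x = mderiv β f x - mderiv β g x from
    H (msize β) β rfl x hx
  intro n
  induction n with
  | zero =>
    intro β hn x hx
    have h0 : β 0 = 0 ∧ β 1 = 0 ∧ β 2 = 0 := by unfold msize at hn; omega
    simp [mderiv, h0.1, h0.2.1, h0.2.2]
  | succ n ih =>
    intro β hn x hx
    obtain ⟨i, γ, hβ, hγ⟩ := exists_decomp β (by omega)
    subst hβ
    rw [mderiv_add_single γ hs (by
      exact ContDiffOn.sub hf hg) hx,
      mderiv_add_single γ hs hf hx, mderiv_add_single γ hs hg hx]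
    have heq : EqOn (mderiv γ (fun y => f y - g y)) (fun y => mderiv γ f y - mderiv γ g y) s :=
      fun y hy => ih γ (by omega) y hy
    rw [pd_congr_on hs heq hx]
    exact pd_sub (diffAt_of_contDiffOn hs (mderiv_contDiffOn γ hs hf) hx)
      (diffAt_of_contDiffOn hs (mderiv_contDiffOn γ hs hg) hx)

end layer2

section layer3
open ContDiff Filter Topology
variable {s : Set E3} {x : E3} {i : Fin 3} {ι : Type*}

lemma listSum_map_add {L : List ι} (A B : ι → ℝ) :
    (L.map (fun t => A t + B t)).sum = (L.map A).sum + (L.map B).sum := by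
  induction L with
  | nil => simp
  | cons a L ih => simp [ih]; ring

lemma differentiableAt_listSum {L : List ι} {F : ι → E3 → ℝ}
    (h : ∀ t ∈ L, DifferentiableAt ℝ (F t) x) :
    DifferentiableAt ℝ (fun y => (L.map (fun t => F t y)).sum) x := by
  induction L with
  | nil => simpa using differentiableAt_const (0:ℝ)
  | cons a L ih =>
    simp only [List.map_cons, List.sum_cons]
    exact (h a (by simp)).add (ih (fun t ht => h t (by simp [ht])))

lemma pd_listSum {L : List ι} {F : ι → E3 → ℝ}
    (h : ∀ t ∈ L, DifferentiableAt ℝ (F t) x) :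
    pd i (fun y => (L.map (fun t => F t y)).sum) x = (L.map (fun t => pd i (F t) x)).sum := by
  induction L with
  | nil => simp only [List.map_nil, List.sum_nil]; exact congrFun pd_zero_fun x
  | cons a L ih =>
    simp only [List.map_cons, List.sum_cons]
    have hd1 := h a (by simp)
    have hd2 := differentiableAt_listSum (fun t ht => h t (List.mem_cons_of_mem a ht))
    have : pd i (fun y => F a y + (L.map (fun t => F t y)).sum) x
        = pd i (F a) x + pd i (fun y => (L.map (fun t => F t y)).sum) x := by
      simp [pd, fderiv_fun_add hd1 hd2]
    rw [this, ih (fun t ht => h t (List.mem_cons_of_mem a ht))]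

lemma tendsto_listSum_zero {L : List ι} {F : ι → E3 → ℝ} {l : Filter E3}
    (h : ∀ t ∈ L, Tendsto (F t) l (𝓝 0)) :
    Tendsto (fun y => (L.map (fun t => F t y)).sum) l (𝓝 0) := by
  induction L with
  | nil => simpa using tendsto_const_nhds
  | cons a L ih =>
    simp only [List.map_cons, List.sum_cons]
    have := (h a (by simp)).add (ih (fun t ht => h t (List.mem_cons_of_mem a ht)))
    simpa using this

lemma leibniz_rep (lam g : E3 → ℝ) (hs : IsOpen s) (hl : ContDiffOn ℝ ∞ lam s)
    (hg : ContDiffOn ℝ ∞ g s) (β : Fin 3 → ℕ) :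
    ∃ L : List (ℝ × (Fin 3 → ℕ) × (Fin 3 → ℕ)),
      (∀ t ∈ L, msize t.2.2 ≤ msize β) ∧
      ∀ x ∈ s, mderiv β (fun y => lam y * g y) x =
        (L.map (fun t => t.1 * (mderiv t.2.1 lam x * mderiv t.2.2 g x))).sum := by
  suffices H : ∀ n (β : Fin 3 → ℕ), msize β = n →
      ∃ L : List (ℝ × (Fin 3 → ℕ) × (Fin 3 → ℕ)),
      (∀ t ∈ L, msize t.2.2 ≤ msize β) ∧
      ∀ x ∈ s, mderiv β (fun y => lam y * g y) x =
        (L.map (fun t => t.1 * (mderiv t.2.1 lam x * mderiv t.2.2 g x))).sum from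
    H (msize β) β rfl
  intro n
  induction n with
  | zero =>
    intro β hn
    have h0 : β 0 = 0 ∧ β 1 = 0 ∧ β 2 = 0 := by unfold msize at hn; omega
    refine ⟨[(1, (fun _ => 0), (fun _ => 0))], ?_, fun x hx => ?_⟩
    · intro t ht
      simp only [List.mem_singleton] at ht
      subst ht
      simp [msize]
    simp [mderiv, h0.1, h0.2.1, h0.2.2, msize]
  | succ n ih =>
    intro β hn
    obtain ⟨i, γ, hβ, hγ⟩ := exists_decomp β (by omega)
    obtain ⟨L, hLb, hLe⟩ := ih γ (by omega)
    subst hβ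
    set T : (ℝ × (Fin 3 → ℕ) × (Fin 3 → ℕ)) → E3 → ℝ :=
      fun t x => t.1 * (mderiv t.2.1 lam x * mderiv t.2.2 g x) with hT
    refine ⟨L.map (fun t => (t.1, t.2.1 + Pi.single i 1, t.2.2)) ++
            L.map (fun t => (t.1, t.2.1, t.2.2 + Pi.single i 1)), ?_, ?_⟩
    · intro t' ht'
      rcases List.mem_append.1 ht' with h | h <;> obtain ⟨t, ht, rfl⟩ := List.mem_map.1 h
      · exact le_trans (hLb t ht) (by rw [msize_add_single]; omega)
      · simp only [msize_add_single]
        exact Nat.add_le_add_right (hLb t ht) 1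
    · intro x hx
      have hmul : ContDiffOn ℝ ∞ (fun y => lam y * g y) s := hl.mul hg
      rw [mderiv_add_single γ hs hmul hx]
      have hstep1 : pd i (mderiv γ fun y => lam y * g y) x
          = pd i (fun y => (L.map (fun t => T t y)).sum) x :=
        pd_congr_on hs (fun y hy => hLe y hy) hx
      rw [hstep1]
      have hdiff : ∀ t ∈ L, DifferentiableAt ℝ (T t) x := by
        intro t ht
        exact (diffAt_of_contDiffOn hs (mderiv_contDiffOn t.2.1 hs hl) hx).mul
          (diffAt_of_contDiffOn hs (mderiv_contDiffOn t.2.2 hs hg) hx) |>.const_mul t.1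
      rw [pd_listSum hdiff]
      have hterm : ∀ t ∈ L, pd i (T t) x =
          T (t.1, t.2.1 + Pi.single i 1, t.2.2) x + T (t.1, t.2.1, t.2.2 + Pi.single i 1) x := by
        intro t ht
        have d1 := diffAt_of_contDiffOn hs (mderiv_contDiffOn t.2.1 hs hl) hx
        have d2 := diffAt_of_contDiffOn hs (mderiv_contDiffOn t.2.2 hs hg) hx
        have : pd i (T t) x = t.1 * (pd i (mderiv t.2.1 lam) x * mderiv t.2.2 g x
            + mderiv t.2.1 lam x * pd i (mderiv t.2.2 g) x) := by
          rw [show T t = (fun y => t.1 *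
            ((fun z => mderiv t.2.1 lam z * mderiv t.2.2 g z) y)) from rfl]
          rw [pd_const_mul (f := fun z => mderiv t.2.1 lam z * mderiv t.2.2 g z) t.1 (d1.mul d2), pd_mul d1 d2]
        rw [this, ← mderiv_add_single t.2.1 hs hl hx, ← mderiv_add_single t.2.2 hs hg hx]
        simp only [hT]
        ring
      calc (L.map (fun t => pd i (T t) x)).sum
          = (L.map (fun t => T (t.1, t.2.1 + Pi.single i 1, t.2.2) x
              + T (t.1, t.2.1, t.2.2 + Pi.single i 1) x)).sum := by
            exact congrArg List.sum (List.map_congr_left hterm)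
        _ = _ := by
            rw [listSum_map_add, List.map_append, List.map_map, List.map_map]
            rw [List.sum_append]
            simp only [Function.comp_def, hT]
end layer3

section layer4
open ContDiff Filter Topology Set

lemma mderiv_zero_idx (f : E3 → ℝ) : mderiv (fun _ => 0) f = f := rfl

lemma component_contDiffOn {X : E3 → E3} {U : Set E3} (hXs : ContDiffOn ℝ ∞ X U) (j : Fin 3) :
    ContDiffOn ℝ ∞ (fun y => X y j) U :=
  ((EuclideanSpace.proj (𝕜 := ℝ) j).contDiff.comp_contDiffOn hXs).congr (fun y _ => rfl)

lemma core_lemma (U : Set E3) (hU : IsOpen U) (X : E3 → E3) (lam : E3 → ℝ)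
    (hX : IsWeakBeltrami X lam U) (hlam : CInftyBoundedNear lam U {p ∈ U | X p = 0})
    (p : E3) (hp : p ∈ U) (m : ℕ) (hm : 1 ≤ m) (hord : ZeroOfOrder X p m)
    (β : Fin 3 → ℕ) (hβ : msize β = m - 1)
    (c : E3 → ℝ) (hc : ContDiffOn ℝ ∞ c U) (j0 : Fin 3)
    (hceq : ∀ x ∈ U, c x = lam x * X x j0) :
    mderiv β c p = 0 := by
  have hXs : ContDiffOn ℝ ∞ X U := hX.1.of_le (by simp)
  have hcomp : ∀ j, ContDiffOn ℝ ∞ (fun y => X y j) U := component_contDiffOn hXs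
  set K : Set E3 := {q ∈ U | X q = 0} with hK
  -- p ∈ K
  have hXp : ∀ j, X p j = 0 := fun j => by
    have := hord.1 (fun _ => 0) (by simp [msize]; omega) j
    rwa [mderiv_zero_idx] at this
  have hpK : p ∈ K := ⟨hp, PiLp.ext fun j => by simp [hXp j]⟩
  obtain ⟨V, hV, hVU, hB⟩ := hlam p hpK
  -- S = U \ K is open
  set S : Set E3 := U \ K with hS
  have hSdesc : S = {x | x ∈ U ∧ X x ≠ 0} := by
    ext x
    simp only [hS, hK, mem_diff, mem_setOf_eq, mem_sep_iff, not_and]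
    constructor
    · rintro ⟨hxU, h2⟩; exact ⟨hxU, fun h0 => h2 hxU h0⟩
    · rintro ⟨hxU, h2⟩; exact ⟨hxU, fun _ => h2⟩
  have hSopen : IsOpen S := by
    rw [hSdesc]
    rw [isOpen_iff_mem_nhds]
    rintro x ⟨hxU, hx0⟩
    have hcx : ContinuousAt X x := hXs.continuousOn.continuousAt (hU.mem_nhds hxU)
    filter_upwards [hU.mem_nhds hxU, hcx.eventually_ne hx0] with y h1 h2
    exact ⟨h1, h2⟩
  have hSU : S ⊆ U := diff_subset
  -- curl components smooth on U
  have hcurl : ∀ i : Fin 3, ContDiffOn ℝ ∞ (fun y => vcurl X y i) U := by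
    intro i
    fin_cases i
    · exact (pd_contDiffOn hU (hcomp 2)).sub (pd_contDiffOn hU (hcomp 1))
    · exact (pd_contDiffOn hU (hcomp 0)).sub (pd_contDiffOn hU (hcomp 2))
    · exact (pd_contDiffOn hU (hcomp 1)).sub (pd_contDiffOn hU (hcomp 0))
  -- lam smooth on S
  have hlamS : ContDiffOn ℝ ∞ lam S := by
    intro x hx
    rw [hSdesc] at hx
    obtain ⟨hxU, hx0⟩ := hx
    have : ∃ j, X x j ≠ 0 := by
      by_contra hcon
      push_neg at hcon
      exact hx0 (PiLp.ext fun j => by simp [hcon j])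
    obtain ⟨j, hj⟩ := this
    have hcXj : ContinuousAt (fun y => X y j) x :=
      (hcomp j).continuousOn.continuousAt (hU.mem_nhds hxU)
    have hq : ContDiffAt ℝ ∞ (fun y => vcurl X y j / X y j) x :=
      ((hcurl j).contDiffAt (hU.mem_nhds hxU)).div ((hcomp j).contDiffAt (hU.mem_nhds hxU)) hj
    have hev : (fun y => vcurl X y j / X y j) =ᶠ[nhds x] lam := by
      filter_upwards [hU.mem_nhds hxU, hcXj.eventually_ne hj] with y h1 h2
      rw [hX.2.2.1 y h1 j, mul_div_assoc, div_self h2, mul_one]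
    exact (hq.congr_of_eventuallyEq hev.symm).contDiffWithinAt
  -- W
  set W : Set E3 := interior V ∩ S with hW
  have hWopen : IsOpen W := isOpen_interior.inter hSopen
  have hWVK : W ⊆ V \ K := fun x hx => ⟨interior_subset hx.1, hx.2.2⟩
  have hWU : W ⊆ U := fun x hx => hx.2.1
  -- p in closure S
  have hpS : p ∈ closure S := by
    by_contra hcl
    rw [mem_closure_iff] at hcl
    push_neg at hcl
    obtain ⟨o, ho, hpo, hoS⟩ := hcl
    have hO' : IsOpen (o ∩ U) := ho.inter hU
    have hzero : ∀ j : Fin 3, EqOn (fun y => X y j) (fun _ => (0:ℝ)) (o ∩ U) := by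
      intro j y hy
      have hyS : y ∉ S := fun hyS => by
        have : y ∈ o ∩ S := ⟨hy.1, hyS⟩
        rw [hoS] at this
        exact this
      rw [hSdesc] at hyS
      simp only [mem_setOf_eq, not_and, not_not] at hyS
      have := hyS hy.2
      simp [this]
    obtain ⟨β₀, hβ₀, j, hj⟩ := hord.2
    apply hj
    rw [mderiv_congr_on β₀ hO' (hzero j) ⟨hpo, hp⟩, mderiv_zero_fun]
  -- NeBot
  have hpV : p ∈ interior V := mem_interior_iff_mem_nhds.mpr hV
  have hnb : (nhdsWithin p W).NeBot := by
    rw [hW, nhdsWithin_inter_of_mem (mem_nhdsWithin_of_mem_nhds (isOpen_interior.mem_nhds hpV))]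
    exact mem_closure_iff_nhdsWithin_neBot.mp hpS
  -- Leibniz on W
  set g : E3 → ℝ := fun y => X y j0 with hg
  obtain ⟨L, hLb, hLe⟩ := leibniz_rep lam g hWopen (hlamS.mono (fun x hx => hx.2))
    ((hcomp j0).mono hWU) β
  -- each term tends to 0
  have hterm0 : ∀ t ∈ L, Tendsto (fun x => t.1 * (mderiv t.2.1 lam x * mderiv t.2.2 g x))
      (nhdsWithin p W) (nhds 0) := by
    intro t ht
    obtain ⟨C, hC⟩ := hB t.2.1
    have hgd : mderiv t.2.2 g p = 0 := by
      apply hord.1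
      have := hLb t ht
      omega
    have hgc : Tendsto (fun x => mderiv t.2.2 g x) (nhdsWithin p W) (nhds 0) := by
      have := ((mderiv_contDiffOn t.2.2 hU (hcomp j0)).continuousOn.continuousAt
        (hU.mem_nhds hp)).tendsto
      rw [hgd] at this
      exact this.mono_left nhdsWithin_le_nhds
    apply squeeze_zero_norm' (a := fun x => (|t.1| * C) * |mderiv t.2.2 g x|)
    · filter_upwards [eventually_mem_nhdsWithin] with x hx
      have hb := hC x (hWVK hx)
      rw [Real.norm_eq_abs, abs_mul, abs_mul]
      have h1 : |mderiv t.2.1 lam x| * |mderiv t.2.2 g x| ≤ C * |mderiv t.2.2 g x| :=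
        mul_le_mul_of_nonneg_right hb (abs_nonneg _)
      calc |t.1| * (|mderiv t.2.1 lam x| * |mderiv t.2.2 g x|)
          ≤ |t.1| * (C * |mderiv t.2.2 g x|) := mul_le_mul_of_nonneg_left h1 (abs_nonneg _)
        _ = (|t.1| * C) * |mderiv t.2.2 g x| := by ring
    · have := (hgc.abs).const_mul (|t.1| * C)
      simpa using this
  have hsum0 : Tendsto (fun x => (L.map
      (fun t => t.1 * (mderiv t.2.1 lam x * mderiv t.2.2 g x))).sum)
      (nhdsWithin p W) (nhds 0) :=
    tendsto_listSum_zero hterm0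
  -- mderiv β c agrees with the sum on W
  have hceqU : EqOn c (fun y => lam y * g y) U := fun y hy => hceq y hy
  have heq : mderiv β c =ᶠ[nhdsWithin p W] (fun x => (L.map
      (fun t => t.1 * (mderiv t.2.1 lam x * mderiv t.2.2 g x))).sum) := by
    filter_upwards [eventually_mem_nhdsWithin] with x hx
    rw [mderiv_congr_on β hU hceqU (hWU hx), hLe x hx]
  have T1 : Tendsto (mderiv β c) (nhdsWithin p W) (nhds 0) := hsum0.congr' heq.symm
  have T2 : Tendsto (mderiv β c) (nhdsWithin p W) (nhds (mderiv β c p)) :=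
    ((mderiv_contDiffOn β hU hc).continuousOn.continuousAt
      (hU.mem_nhds hp)).tendsto.mono_left nhdsWithin_le_nhds
  exact tendsto_nhds_unique T2 T1

end layer4


open ContDiff

/-- At a zero `p` of finite order `m ≥ 1` of a weak Beltrami field whose proportionality
function is `C^∞`-bounded near the zero set, for every multi-index `β` with `|β| = m - 1`
the curl of `∂^β X` vanishes at `p`; equivalently, the Jacobian matrix of `∂^β X` at `p`
is symmetric. -/
theorem curl_mderiv_eq_zero_at_finite_order_zero (U : Set E3) (hU : IsOpen U)
    (X : E3 → E3) (lam : E3 → ℝ) (hX : IsWeakBeltrami X lam U)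
    (hlam : CInftyBoundedNear lam U {p ∈ U | X p = 0})
    (p : E3) (hp : p ∈ U) (m : ℕ) (hm : 1 ≤ m) (hord : ZeroOfOrder X p m)
    (β : Fin 3 → ℕ) (hβ : msize β = m - 1) :
    (∀ i, vcurl (mderivVF β X) p i = 0) ∧
      (∀ i j : Fin 3, pd i (mderiv β (fun y => X y j)) p = pd j (mderiv β (fun y => X y i)) p) := by
  have hXs : ContDiffOn ℝ ∞ X U := hX.1.of_le (by simp)
  have hcomp : ∀ j, ContDiffOn ℝ ∞ (fun y => X y j) U := component_contDiffOn hXs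
  have key : ∀ (a b k : Fin 3),
      (∀ x ∈ U, pd a (fun y => X y b) x - pd b (fun y => X y a) x = lam x * X x k) →
      pd a (mderiv β (fun y => X y b)) p = pd b (mderiv β (fun y => X y a)) p := by
    intro a b k hrel
    rw [pd_mderiv_comm β hU (hcomp b) hp, pd_mderiv_comm β hU (hcomp a) hp]
    rw [← sub_eq_zero,
      ← mderiv_sub β hU (pd_contDiffOn hU (hcomp b)) (pd_contDiffOn hU (hcomp a)) hp]
    exact core_lemma U hU X lam hX hlam p hp m hm hord β hβ
      (fun y => pd a (fun z => X z b) y - pd b (fun z => X z a) y)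
      ((pd_contDiffOn hU (hcomp b)).sub (pd_contDiffOn hU (hcomp a))) k hrel
  have e0 : pd 1 (mderiv β (fun y => X y 2)) p = pd 2 (mderiv β (fun y => X y 1)) p := by
    apply key 1 2 0
    intro x hx
    have := hX.2.2.1 x hx 0
    simpa [vcurl] using this
  have e1 : pd 2 (mderiv β (fun y => X y 0)) p = pd 0 (mderiv β (fun y => X y 2)) p := by
    apply key 2 0 1
    intro x hx
    have := hX.2.2.1 x hx 1
    simpa [vcurl] using this
  have e2 : pd 0 (mderiv β (fun y => X y 1)) p = pd 1 (mderiv β (fun y => X y 0)) p := by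
    apply key 0 1 2
    intro x hx
    have := hX.2.2.1 x hx 2
    simpa [vcurl] using this
  have hVF : ∀ j : Fin 3, (fun y => mderivVF β X y j) = mderiv β (fun y => X y j) :=
    fun j => by funext y; rfl
  constructor
  · intro i
    fin_cases i
    · show pd 1 (fun y => mderivVF β X y 2) p - pd 2 (fun y => mderivVF β X y 1) p = 0
      rw [hVF, hVF, e0, sub_self]
    · show pd 2 (fun y => mderivVF β X y 0) p - pd 0 (fun y => mderivVF β X y 2) p = 0
      rw [hVF, hVF, e1, sub_self]
    · show pd 0 (fun y => mderivVF β X y 1) p - pd 1 (fun y => mderivVF β X y 0) p = 0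
      rw [hVF, hVF, e2, sub_self]
  · intro i j
    fin_cases i <;> fin_cases j
    · rfl
    · exact e2
    · exact e1.symm
    · exact e2.symm
    · rfl
    · exact e0
    · exact e1
    · exact e0.symm
    · rfl
end
end

section
/- Let U ⊆ ℝ³ be an open set and let X be a weak Beltrami field on U whose proportionality function λ is C∞-bounded near the zero set K = {p ∈ U : X(p) = 0}. Let p ∈ U be a zero of X of finite order m ≥ 1. Then there exist a multi-index β with |β| = m − 1 and an index j ∈ {1,2,3} such that the gradient ∇(∂^β X^j)(p) ≠ 0, and for any such β the Jacobian matrix (∂ᵢ ∂^β X^j(p))_{j,i} of the vector field ∂^β X at p has rank at least two. -/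
open Set MeasureTheory

noncomputable section

open Filter Topology

namespace BAux

abbrev Sm (f : E3 → ℝ) (s : Set E3) : Prop := ContDiffOn ℝ ((⊤ : ℕ∞) : WithTop ℕ∞) f s

variable {f g : E3 → ℝ} {Ω : Set E3} {x : E3} {i j : Fin 3} {n : ℕ}

theorem pd_congr (h : f =ᶠ[nhds x] g) (i : Fin 3) : pd i f x = pd i g x := by
  unfold pd; rw [h.fderiv_eq]

theorem pd_congr_on (hΩ : IsOpen Ω) (h : EqOn f g Ω) (i : Fin 3) :
    EqOn (pd i f) (pd i g) Ω := fun x hx =>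
  pd_congr (Filter.eventuallyEq_of_mem (hΩ.mem_nhds hx) h) i

theorem pd_iter_congr_on (hΩ : IsOpen Ω) (h : EqOn f g Ω) (i : Fin 3) (n : ℕ) :
    EqOn ((pd i)^[n] f) ((pd i)^[n] g) Ω := by
  induction n generalizing f g with
  | zero => exact h
  | succ n ih =>
    rw [Function.iterate_succ_apply', Function.iterate_succ_apply']
    exact pd_congr_on hΩ (ih h) i

theorem mderiv_congr_on (hΩ : IsOpen Ω) (h : EqOn f g Ω) (β : Fin 3 → ℕ) :
    EqOn (mderiv β f) (mderiv β g) Ω := by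
  unfold mderiv
  exact pd_iter_congr_on hΩ (pd_iter_congr_on hΩ (pd_iter_congr_on hΩ h _ _) _ _) _ _

theorem pd_smooth (hΩ : IsOpen Ω) (hf : Sm f Ω) (i : Fin 3) : Sm (pd i f) Ω := by
  have h1 : ContDiffOn ℝ ((⊤ : ℕ∞) : WithTop ℕ∞) (fderiv ℝ f) Ω :=
    hf.fderiv_of_isOpen hΩ (by exact_mod_cast le_top)
  exact h1.clm_apply contDiffOn_const

theorem pd_iter_smooth (hΩ : IsOpen Ω) (hf : Sm f Ω) (i : Fin 3) (n : ℕ) :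
    Sm ((pd i)^[n] f) Ω := by
  induction n with
  | zero => exact hf
  | succ n ih => rw [Function.iterate_succ_apply']; exact pd_smooth hΩ ih i

theorem mderiv_smooth (hΩ : IsOpen Ω) (hf : Sm f Ω) (β : Fin 3 → ℕ) : Sm (mderiv β f) Ω :=
  pd_iter_smooth hΩ (pd_iter_smooth hΩ (pd_iter_smooth hΩ hf _ _) _ _) _ _

theorem smooth_diffAt (hΩ : IsOpen Ω) (hf : Sm f Ω) (hx : x ∈ Ω) : DifferentiableAt ℝ f x :=
  (hf.contDiffAt (hΩ.mem_nhds hx)).differentiableAt (by simp)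

theorem pd_add (hf : DifferentiableAt ℝ f x) (hg : DifferentiableAt ℝ g x) (i : Fin 3) :
    pd i (fun y => f y + g y) x = pd i f x + pd i g x := by
  unfold pd; rw [fderiv_fun_add hf hg]; rfl

theorem pd_sub (hf : DifferentiableAt ℝ f x) (hg : DifferentiableAt ℝ g x) (i : Fin 3) :
    pd i (fun y => f y - g y) x = pd i f x - pd i g x := by
  unfold pd; rw [fderiv_fun_sub hf hg]; rfl

theorem pd_mul (hf : DifferentiableAt ℝ f x) (hg : DifferentiableAt ℝ g x) (i : Fin 3) :
    pd i (fun y => f y * g y) x = f x * pd i g x + g x * pd i f x := by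
  unfold pd; rw [fderiv_fun_mul hf hg]
  simp [ContinuousLinearMap.add_apply, ContinuousLinearMap.smul_apply, smul_eq_mul]

theorem pd_zero_fun : pd i (fun _ => (0:ℝ)) = fun _ => (0:ℝ) := by
  funext x; unfold pd; rw [fderiv_fun_const]; simp

theorem pd_iter_zero_fun : (pd i)^[n] (fun _ => (0:ℝ)) = fun _ => (0:ℝ) := by
  induction n with
  | zero => rfl
  | succ n ih => rw [Function.iterate_succ_apply', ih, pd_zero_fun]

theorem mderiv_zero_fun (β : Fin 3 → ℕ) : mderiv β (fun _ => (0:ℝ)) = fun _ => (0:ℝ) := by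
  unfold mderiv; rw [pd_iter_zero_fun, pd_iter_zero_fun, pd_iter_zero_fun]

theorem pd_comm (hΩ : IsOpen Ω) (hf : Sm f Ω) (hx : x ∈ Ω) (i j : Fin 3) :
    pd i (pd j f) x = pd j (pd i f) x := by
  have hev : ∀ᶠ y in nhds x, HasFDerivAt f (fderiv ℝ f y) y :=
    eventually_of_mem (hΩ.mem_nhds hx) fun y hy => (smooth_diffAt hΩ hf hy).hasFDerivAt
  have hd2 : DifferentiableAt ℝ (fderiv ℝ f) x := by
    have h := (hf.contDiffAt (hΩ.mem_nhds hx)).fderiv_right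
      (m := ((⊤ : ℕ∞) : WithTop ℕ∞)) (by exact_mod_cast le_top)
    exact h.differentiableAt (by simp)
  have hsymm := second_derivative_symmetric_of_eventually hev hd2.hasFDerivAt
  have key : ∀ v w : E3, fderiv ℝ (fun y => fderiv ℝ f y w) x v
      = fderiv ℝ (fderiv ℝ f) x v w := by
    intro v w
    have h2 : HasFDerivAt (fun y => fderiv ℝ f y w)
        ((ContinuousLinearMap.apply ℝ ℝ w).comp (fderiv ℝ (fderiv ℝ f) x)) x :=
      (ContinuousLinearMap.apply ℝ ℝ w).hasFDerivAt.comp x hd2.hasFDerivAt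
    rw [h2.fderiv]; rfl
  show fderiv ℝ (fun y => fderiv ℝ f y (EuclideanSpace.single j 1)) x (EuclideanSpace.single i 1)
      = fderiv ℝ (fun y => fderiv ℝ f y (EuclideanSpace.single i 1)) x (EuclideanSpace.single j 1)
  rw [key, key, hsymm]

theorem pd_comm_iter (hΩ : IsOpen Ω) (hf : Sm f Ω) (i j : Fin 3) (n : ℕ) :
    EqOn (pd i ((pd j)^[n] f)) ((pd j)^[n] (pd i f)) Ω := by
  induction n generalizing f with
  | zero => exact fun x _ => rfl
  | succ n ih =>
    intro x hx
    rw [Function.iterate_succ_apply, Function.iterate_succ_apply]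
    calc pd i ((pd j)^[n] (pd j f)) x = (pd j)^[n] (pd i (pd j f)) x :=
          ih (pd_smooth hΩ hf j) hx
      _ = (pd j)^[n] (pd j (pd i f)) x :=
          pd_iter_congr_on hΩ (fun y hy => pd_comm hΩ hf hy i j) j n hx

theorem pd_mderiv_comm (hΩ : IsOpen Ω) (hf : Sm f Ω) (i : Fin 3) (β : Fin 3 → ℕ) :
    EqOn (pd i (mderiv β f)) (mderiv β (pd i f)) Ω := by
  unfold mderiv
  intro x hx
  have h2 := pd_comm_iter hΩ hf i 2 (β 2)
  have h1 : EqOn (pd i ((pd 1)^[β 1] ((pd 2)^[β 2] f)))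
      ((pd 1)^[β 1] ((pd 2)^[β 2] (pd i f))) Ω := by
    intro y hy
    calc pd i ((pd 1)^[β 1] ((pd 2)^[β 2] f)) y
        = (pd 1)^[β 1] (pd i ((pd 2)^[β 2] f)) y :=
          pd_comm_iter hΩ (pd_iter_smooth hΩ hf 2 (β 2)) i 1 (β 1) hy
      _ = (pd 1)^[β 1] ((pd 2)^[β 2] (pd i f)) y := pd_iter_congr_on hΩ h2 1 (β 1) hy
  calc pd i ((pd 0)^[β 0] ((pd 1)^[β 1] ((pd 2)^[β 2] f))) x
      = (pd 0)^[β 0] (pd i ((pd 1)^[β 1] ((pd 2)^[β 2] f))) x :=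
        pd_comm_iter hΩ (pd_iter_smooth hΩ (pd_iter_smooth hΩ hf 2 (β 2)) 1 (β 1)) i 0 (β 0) hx
    _ = (pd 0)^[β 0] ((pd 1)^[β 1] ((pd 2)^[β 2] (pd i f))) x :=
        pd_iter_congr_on hΩ h1 0 (β 0) hx

theorem pd_mderiv_absorb0 (hΩ : IsOpen Ω) (hf : Sm f Ω) (β β' : Fin 3 → ℕ)
    (h0 : β' 0 = β 0 + 1) (h1 : β' 1 = β 1) (h2 : β' 2 = β 2) :
    EqOn (pd 0 (mderiv β f)) (mderiv β' f) Ω := by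
  intro x hx
  have hc := pd_mderiv_comm hΩ hf 0 β hx
  unfold mderiv at hc ⊢
  rw [hc, h0, h1, h2, Function.iterate_succ_apply]
  have hinner : EqOn ((pd 1)^[β 1] ((pd 2)^[β 2] (pd 0 f)))
      (pd 0 ((pd 1)^[β 1] ((pd 2)^[β 2] f))) Ω := by
    intro y hy
    have s2 : EqOn ((pd 2)^[β 2] (pd 0 f)) (pd 0 ((pd 2)^[β 2] f)) Ω :=
      fun z hz => (pd_comm_iter hΩ hf 0 2 (β 2) hz).symm
    calc (pd 1)^[β 1] ((pd 2)^[β 2] (pd 0 f)) y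
        = (pd 1)^[β 1] (pd 0 ((pd 2)^[β 2] f)) y := pd_iter_congr_on hΩ s2 1 (β 1) hy
      _ = pd 0 ((pd 1)^[β 1] ((pd 2)^[β 2] f)) y :=
          (pd_comm_iter hΩ (pd_iter_smooth hΩ hf 2 (β 2)) 0 1 (β 1) hy).symm
  exact pd_iter_congr_on hΩ hinner 0 (β 0) hx

theorem pd_mderiv_absorb1 (hΩ : IsOpen Ω) (hf : Sm f Ω) (β β' : Fin 3 → ℕ)
    (h0 : β' 0 = β 0) (h1 : β' 1 = β 1 + 1) (h2 : β' 2 = β 2) :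
    EqOn (pd 1 (mderiv β f)) (mderiv β' f) Ω := by
  intro x hx
  have hc := pd_mderiv_comm hΩ hf 1 β hx
  unfold mderiv at hc ⊢
  rw [hc, h0, h1, h2, Function.iterate_succ_apply]
  have hinner : EqOn ((pd 2)^[β 2] (pd 1 f)) (pd 1 ((pd 2)^[β 2] f)) Ω :=
    fun z hz => (pd_comm_iter hΩ hf 1 2 (β 2) hz).symm
  exact pd_iter_congr_on hΩ (pd_iter_congr_on hΩ hinner 1 (β 1)) 0 (β 0) hx

theorem pd_mderiv_absorb2 (hΩ : IsOpen Ω) (hf : Sm f Ω) (β β' : Fin 3 → ℕ)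
    (h0 : β' 0 = β 0) (h1 : β' 1 = β 1) (h2 : β' 2 = β 2 + 1) :
    EqOn (pd 2 (mderiv β f)) (mderiv β' f) Ω := by
  intro x hx
  have hc := pd_mderiv_comm hΩ hf 2 β hx
  unfold mderiv at hc ⊢
  rw [hc, h0, h1, h2, Function.iterate_succ_apply]

theorem mderiv_peel2 (β : Fin 3 → ℕ) (k : ℕ) (h : β 2 = k + 1) (f : E3 → ℝ) :
    mderiv β f = mderiv (Function.update β 2 k) (pd 2 f) := by
  unfold mderiv
  rw [show Function.update β 2 k 0 = β 0 from rfl, show Function.update β 2 k 1 = β 1 from rfl,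
    show Function.update β 2 k 2 = k from rfl, h, Function.iterate_succ_apply]

theorem mderiv_peel1 (β : Fin 3 → ℕ) (k : ℕ) (h : β 1 = k + 1) (h2 : β 2 = 0) (f : E3 → ℝ) :
    mderiv β f = mderiv (Function.update β 1 k) (pd 1 f) := by
  unfold mderiv
  rw [show Function.update β 1 k 0 = β 0 from rfl, show Function.update β 1 k 1 = k from rfl,
    show Function.update β 1 k 2 = β 2 from rfl, h, h2, Function.iterate_succ_apply]
  rfl

theorem mderiv_peel0 (β : Fin 3 → ℕ) (k : ℕ) (h : β 0 = k + 1) (h1 : β 1 = 0) (h2 : β 2 = 0)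
    (f : E3 → ℝ) : mderiv β f = mderiv (Function.update β 0 k) (pd 0 f) := by
  unfold mderiv
  rw [show Function.update β 0 k 0 = k from rfl, show Function.update β 0 k 1 = β 1 from rfl,
    show Function.update β 0 k 2 = β 2 from rfl, h, h1, h2, Function.iterate_succ_apply]
  rfl

theorem mderiv_outer0 (β : Fin 3 → ℕ) (k : ℕ) (h : β 0 = k + 1) (f : E3 → ℝ) :
    mderiv β f = pd 0 (mderiv (Function.update β 0 k) f) := by
  unfold mderiv
  rw [show Function.update β 0 k 0 = k from rfl, show Function.update β 0 k 1 = β 1 from rfl,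
    show Function.update β 0 k 2 = β 2 from rfl, h, Function.iterate_succ_apply']

theorem mderiv_outer1 (β : Fin 3 → ℕ) (k : ℕ) (h0 : β 0 = 0) (h : β 1 = k + 1) (f : E3 → ℝ) :
    mderiv β f = pd 1 (mderiv (Function.update β 1 k) f) := by
  unfold mderiv
  rw [show Function.update β 1 k 0 = β 0 from rfl, show Function.update β 1 k 1 = k from rfl,
    show Function.update β 1 k 2 = β 2 from rfl, h0, h, Function.iterate_succ_apply']
  rfl

theorem mderiv_outer2 (β : Fin 3 → ℕ) (k : ℕ) (h0 : β 0 = 0) (h1 : β 1 = 0) (h : β 2 = k + 1)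
    (f : E3 → ℝ) : mderiv β f = pd 2 (mderiv (Function.update β 2 k) f) := by
  unfold mderiv
  rw [show Function.update β 2 k 0 = β 0 from rfl, show Function.update β 2 k 1 = β 1 from rfl,
    show Function.update β 2 k 2 = k from rfl, h0, h1, h, Function.iterate_succ_apply']
  rfl

theorem smooth_mul (hf : Sm f Ω) (hg : Sm g Ω) : Sm (fun y => f y * g y) Ω := hf.mul hg

theorem pd_iter_add_on (hΩ : IsOpen Ω) (hf : Sm f Ω) (hg : Sm g Ω) (i : Fin 3) (n : ℕ) :
    EqOn ((pd i)^[n] (fun y => f y + g y))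
      (fun y => (pd i)^[n] f y + (pd i)^[n] g y) Ω := by
  induction n with
  | zero => exact fun x _ => rfl
  | succ n ih =>
    intro x hx
    rw [Function.iterate_succ_apply', Function.iterate_succ_apply',
      Function.iterate_succ_apply']
    calc pd i ((pd i)^[n] fun y => f y + g y) x
        = pd i (fun y => (pd i)^[n] f y + (pd i)^[n] g y) x := pd_congr_on hΩ ih i hx
      _ = pd i ((pd i)^[n] f) x + pd i ((pd i)^[n] g) x :=
          pd_add (smooth_diffAt hΩ (pd_iter_smooth hΩ hf i n) hx)
            (smooth_diffAt hΩ (pd_iter_smooth hΩ hg i n) hx) i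

theorem mderiv_add_on (hΩ : IsOpen Ω) (hf : Sm f Ω) (hg : Sm g Ω) (β : Fin 3 → ℕ) :
    EqOn (mderiv β (fun y => f y + g y)) (fun y => mderiv β f y + mderiv β g y) Ω := by
  intro x hx
  unfold mderiv
  have h2 := pd_iter_add_on hΩ hf hg 2 (β 2)
  have h1 : EqOn ((pd 1)^[β 1] ((pd 2)^[β 2] fun y => f y + g y))
      (fun y => (pd 1)^[β 1] ((pd 2)^[β 2] f) y + (pd 1)^[β 1] ((pd 2)^[β 2] g) y) Ω := by
    intro y hy
    calc (pd 1)^[β 1] ((pd 2)^[β 2] fun y => f y + g y) y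
        = (pd 1)^[β 1] (fun y => (pd 2)^[β 2] f y + (pd 2)^[β 2] g y) y :=
          pd_iter_congr_on hΩ h2 1 (β 1) hy
      _ = _ := pd_iter_add_on hΩ (pd_iter_smooth hΩ hf 2 (β 2))
          (pd_iter_smooth hΩ hg 2 (β 2)) 1 (β 1) hy
  calc (pd 0)^[β 0] ((pd 1)^[β 1] ((pd 2)^[β 2] fun y => f y + g y)) x
      = (pd 0)^[β 0] (fun y => (pd 1)^[β 1] ((pd 2)^[β 2] f) y
          + (pd 1)^[β 1] ((pd 2)^[β 2] g) y) x := pd_iter_congr_on hΩ h1 0 (β 0) hx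
    _ = _ := pd_iter_add_on hΩ (pd_iter_smooth hΩ (pd_iter_smooth hΩ hf 2 (β 2)) 1 (β 1))
        (pd_iter_smooth hΩ (pd_iter_smooth hΩ hg 2 (β 2)) 1 (β 1)) 0 (β 0) hx

theorem pd_iter_sub_on (hΩ : IsOpen Ω) (hf : Sm f Ω) (hg : Sm g Ω) (i : Fin 3) (n : ℕ) :
    EqOn ((pd i)^[n] (fun y => f y - g y))
      (fun y => (pd i)^[n] f y - (pd i)^[n] g y) Ω := by
  induction n with
  | zero => exact fun x _ => rfl
  | succ n ih =>
    intro x hx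
    rw [Function.iterate_succ_apply', Function.iterate_succ_apply',
      Function.iterate_succ_apply']
    calc pd i ((pd i)^[n] fun y => f y - g y) x
        = pd i (fun y => (pd i)^[n] f y - (pd i)^[n] g y) x := pd_congr_on hΩ ih i hx
      _ = pd i ((pd i)^[n] f) x - pd i ((pd i)^[n] g) x :=
          pd_sub (smooth_diffAt hΩ (pd_iter_smooth hΩ hf i n) hx)
            (smooth_diffAt hΩ (pd_iter_smooth hΩ hg i n) hx) i

theorem mderiv_sub_on (hΩ : IsOpen Ω) (hf : Sm f Ω) (hg : Sm g Ω) (β : Fin 3 → ℕ) :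
    EqOn (mderiv β (fun y => f y - g y)) (fun y => mderiv β f y - mderiv β g y) Ω := by
  intro x hx
  unfold mderiv
  have h2 := pd_iter_sub_on hΩ hf hg 2 (β 2)
  have h1 : EqOn ((pd 1)^[β 1] ((pd 2)^[β 2] fun y => f y - g y))
      (fun y => (pd 1)^[β 1] ((pd 2)^[β 2] f) y - (pd 1)^[β 1] ((pd 2)^[β 2] g) y) Ω := by
    intro y hy
    calc (pd 1)^[β 1] ((pd 2)^[β 2] fun y => f y - g y) y
        = (pd 1)^[β 1] (fun y => (pd 2)^[β 2] f y - (pd 2)^[β 2] g y) y :=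
          pd_iter_congr_on hΩ h2 1 (β 1) hy
      _ = _ := pd_iter_sub_on hΩ (pd_iter_smooth hΩ hf 2 (β 2))
          (pd_iter_smooth hΩ hg 2 (β 2)) 1 (β 1) hy
  calc (pd 0)^[β 0] ((pd 1)^[β 1] ((pd 2)^[β 2] fun y => f y - g y)) x
      = (pd 0)^[β 0] (fun y => (pd 1)^[β 1] ((pd 2)^[β 2] f) y
          - (pd 1)^[β 1] ((pd 2)^[β 2] g) y) x := pd_iter_congr_on hΩ h1 0 (β 0) hx
    _ = _ := pd_iter_sub_on hΩ (pd_iter_smooth hΩ (pd_iter_smooth hΩ hf 2 (β 2)) 1 (β 1))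
        (pd_iter_smooth hΩ (pd_iter_smooth hΩ hg 2 (β 2)) 1 (β 1)) 0 (β 0) hx

theorem key_tendsto (hΩ : IsOpen Ω) (p : E3) (G F : E3 → ℝ) (M : ℕ)
    (hG : Sm G Ω) (hF : Sm F Ω)
    (hbd : ∀ γ : Fin 3 → ℕ, ∃ C : ℝ, ∀ x ∈ Ω, |mderiv γ G x| ≤ C)
    (hFlim : ∀ δ : Fin 3 → ℕ, msize δ ≤ M →
      Tendsto (mderiv δ F) (nhdsWithin p Ω) (nhds 0)) :
    ∀ n : ℕ, ∀ β γ δ : Fin 3 → ℕ, msize β = n → msize β + msize δ ≤ M →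
      Tendsto (fun x => mderiv β (fun y => mderiv γ G y * mderiv δ F y) x)
        (nhdsWithin p Ω) (nhds 0) := by
  intro n
  induction n with
  | zero =>
    intro β γ δ hβ hMle
    have h0 : β 0 = 0 ∧ β 1 = 0 ∧ β 2 = 0 := by unfold msize at hβ; omega
    have hrw : mderiv β (fun y => mderiv γ G y * mderiv δ F y)
        = fun y => mderiv γ G y * mderiv δ F y := by
      unfold mderiv; rw [h0.1, h0.2.1, h0.2.2]; rfl
    rw [hrw]
    obtain ⟨C, hC⟩ := hbd γ
    have hd : Tendsto (fun x => |C| * |mderiv δ F x|) (nhdsWithin p Ω) (nhds 0) := by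
      have h := ((hFlim δ (by omega)).abs).const_mul |C|
      simpa using h
    apply squeeze_zero_norm' ?_ hd
    filter_upwards [self_mem_nhdsWithin] with x hx
    rw [Real.norm_eq_abs, abs_mul]
    exact mul_le_mul (le_trans (hC x hx) (le_abs_self C)) le_rfl (abs_nonneg _) (abs_nonneg _)
  | succ n ih =>
    intro β γ δ hβ hMle
    have hstep : ∀ (i : Fin 3) (β' γ' δ' : Fin 3 → ℕ),
        (∀ h : E3 → ℝ, mderiv β h = mderiv β' (pd i h)) →
        EqOn (pd i (mderiv γ G)) (mderiv γ' G) Ω →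
        EqOn (pd i (mderiv δ F)) (mderiv δ' F) Ω →
        msize β' = n → msize δ' = msize δ + 1 →
        Tendsto (fun x => mderiv β (fun y => mderiv γ G y * mderiv δ F y) x)
          (nhdsWithin p Ω) (nhds 0) := by
      intro i β' γ' δ' hpeel habsG habsF hβ' hδ'
      have hGs : Sm (mderiv γ G) Ω := mderiv_smooth hΩ hG γ
      have hFs : Sm (mderiv δ F) Ω := mderiv_smooth hΩ hF δ
      have hG's : Sm (mderiv γ' G) Ω := mderiv_smooth hΩ hG γ'
      have hF's : Sm (mderiv δ' F) Ω := mderiv_smooth hΩ hF δ'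
      have step1 : EqOn (pd i (fun y => mderiv γ G y * mderiv δ F y))
          (fun y => mderiv γ' G y * mderiv δ F y + mderiv γ G y * mderiv δ' F y) Ω := by
        intro x hx
        rw [pd_mul (smooth_diffAt hΩ hGs hx) (smooth_diffAt hΩ hFs hx) i,
          habsG hx, habsF hx]
        ring
      have step2 : EqOn (mderiv β (fun y => mderiv γ G y * mderiv δ F y))
          (fun y => mderiv β' (fun z => mderiv γ' G z * mderiv δ F z) y
            + mderiv β' (fun z => mderiv γ G z * mderiv δ' F z) y) Ω := by
        intro x hx
        rw [hpeel]
        calc mderiv β' (pd i (fun y => mderiv γ G y * mderiv δ F y)) x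
            = mderiv β' (fun y => mderiv γ' G y * mderiv δ F y
                + mderiv γ G y * mderiv δ' F y) x := mderiv_congr_on hΩ step1 β' hx
          _ = _ := mderiv_add_on hΩ (smooth_mul hG's hFs) (smooth_mul hGs hF's) β' hx
      have t1 := ih β' γ' δ hβ' (by omega)
      have t2 := ih β' γ δ' hβ' (by omega)
      have hsum := t1.add t2
      rw [add_zero] at hsum
      apply hsum.congr'
      filter_upwards [self_mem_nhdsWithin] with x hx
      exact (step2 hx).symm
    by_cases h2 : β 2 = 0
    · by_cases h1 : β 1 = 0
      · obtain ⟨k, hk⟩ : ∃ k, β 0 = k + 1 := ⟨β 0 - 1, by unfold msize at hβ; omega⟩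
        refine hstep 0 (Function.update β 0 k) (Function.update γ 0 (γ 0 + 1))
          (Function.update δ 0 (δ 0 + 1)) (fun h => mderiv_peel0 β k hk h1 h2 h)
          (pd_mderiv_absorb0 hΩ hG γ _ rfl rfl rfl)
          (pd_mderiv_absorb0 hΩ hF δ _ rfl rfl rfl) ?_ ?_
        · unfold msize at hβ ⊢
          simp only [Function.update_apply]
          norm_num [Fin.ext_iff]
          omega
        · unfold msize
          simp only [Function.update_apply]
          norm_num [Fin.ext_iff]
          omega
      · obtain ⟨k, hk⟩ : ∃ k, β 1 = k + 1 := ⟨β 1 - 1, by omega⟩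
        refine hstep 1 (Function.update β 1 k) (Function.update γ 1 (γ 1 + 1))
          (Function.update δ 1 (δ 1 + 1)) (fun h => mderiv_peel1 β k hk h2 h)
          (pd_mderiv_absorb1 hΩ hG γ _ rfl rfl rfl)
          (pd_mderiv_absorb1 hΩ hF δ _ rfl rfl rfl) ?_ ?_
        · unfold msize at hβ ⊢
          simp only [Function.update_apply]
          norm_num [Fin.ext_iff]
          omega
        · unfold msize
          simp only [Function.update_apply]
          norm_num [Fin.ext_iff]
          omega
    · obtain ⟨k, hk⟩ : ∃ k, β 2 = k + 1 := ⟨β 2 - 1, by omega⟩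
      refine hstep 2 (Function.update β 2 k) (Function.update γ 2 (γ 2 + 1))
        (Function.update δ 2 (δ 2 + 1)) (fun h => mderiv_peel2 β k hk h)
        (pd_mderiv_absorb2 hΩ hG γ _ rfl rfl rfl)
        (pd_mderiv_absorb2 hΩ hF δ _ rfl rfl rfl) ?_ ?_
      · unfold msize at hβ ⊢
        simp only [Function.update_apply]
        norm_num [Fin.ext_iff]
        omega
      · unfold msize
        simp only [Function.update_apply]
        norm_num [Fin.ext_iff]
        omega

theorem rank_two_of_symm_traceless (A : Matrix (Fin 3) (Fin 3) ℝ)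
    (h01 : A 0 1 = A 1 0) (h02 : A 0 2 = A 2 0) (h12 : A 1 2 = A 2 1)
    (htr : A 0 0 + A 1 1 + A 2 2 = 0) (hne : ∃ j i, A j i ≠ 0) : 2 ≤ A.rank := by
  by_contra hlt
  push_neg at hlt
  have hdep : ∀ a b : Fin 3,
      ¬ LinearIndependent ℝ ![fun i => A i a, fun i => A i b] := by
    intro a b hind
    have hcol : ∀ c : Fin 3, (fun i => A i c) = A.mulVecLin (Pi.single c 1) := by
      intro c; funext i
      simp [Matrix.mulVecLin_apply, Matrix.mulVec_single]
    have hsub : Set.range ![(fun i => A i a), (fun i => A i b)]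
        ⊆ (LinearMap.range A.mulVecLin : Set (Fin 3 → ℝ)) := by
      rintro y ⟨t, rfl⟩
      fin_cases t
      · exact ⟨Pi.single a 1, (hcol a).symm⟩
      · exact ⟨Pi.single b 1, (hcol b).symm⟩
    have hle : Submodule.span ℝ (Set.range ![(fun i => A i a), (fun i => A i b)])
        ≤ LinearMap.range A.mulVecLin := Submodule.span_le.2 hsub
    have hfr := finrank_span_eq_card hind
    have h2 : 2 ≤ A.rank := by
      calc 2 = Module.finrank ℝ (Submodule.span ℝ
              (Set.range ![(fun i => A i a), (fun i => A i b)])) := by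
            rw [hfr]; simp
        _ ≤ Module.finrank ℝ (LinearMap.range A.mulVecLin) := Submodule.finrank_mono hle
        _ = A.rank := rfl
    omega
  have hminor : ∀ a b i j : Fin 3, A i a * A j b = A j a * A i b := by
    intro a b i j
    have h := hdep a b
    rw [LinearIndependent.pair_iff] at h
    push_neg at h
    obtain ⟨s, t, hst, hne'⟩ := h
    have hcomp : ∀ k : Fin 3, s * A k a + t * A k b = 0 := by
      intro k
      have := congr_fun hst k
      simpa [smul_eq_mul] using this
    have hsM : s * (A i a * A j b - A j a * A i b) = 0 := by
      linear_combination A j b * hcomp i - A i b * hcomp j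
    have htM : t * (A i a * A j b - A j a * A i b) = 0 := by
      linear_combination (- A j a) * hcomp i + A i a * hcomp j
    have hM : A i a * A j b - A j a * A i b = 0 := by
      by_cases hs : s = 0
      · rcases mul_eq_zero.mp htM with h | h
        · exact absurd h (hne' hs)
        · exact h
      · rcases mul_eq_zero.mp hsM with h | h
        · exact absurd h hs
        · exact h
    linarith [hM]
  have m01 := hminor 0 1 0 1
  have m02 := hminor 0 2 0 2
  have m12 := hminor 1 2 1 2
  rw [h01] at m01
  rw [h02] at m02
  rw [h12] at m12
  have hsum : A 0 0 ^ 2 + A 1 1 ^ 2 + A 2 2 ^ 2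
      + 2 * A 1 0 ^ 2 + 2 * A 2 0 ^ 2 + 2 * A 2 1 ^ 2 = 0 := by
    linear_combination (A 0 0 + A 1 1 + A 2 2) * htr - 2 * m01 - 2 * m02 - 2 * m12
  have sqz : ∀ r : ℝ, r ^ 2 ≤ 0 → r = 0 := fun r h => by
    have h2 : r ^ 2 = 0 := le_antisymm h (sq_nonneg r)
    exact pow_eq_zero_iff two_ne_zero |>.mp h2
  have hz : A 0 0 = 0 ∧ A 1 1 = 0 ∧ A 2 2 = 0 ∧ A 1 0 = 0 ∧ A 2 0 = 0 ∧ A 2 1 = 0 := by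
    refine ⟨sqz _ ?_, sqz _ ?_, sqz _ ?_, sqz _ ?_, sqz _ ?_, sqz _ ?_⟩ <;>
      linarith [hsum, sq_nonneg (A 0 0), sq_nonneg (A 1 1), sq_nonneg (A 2 2),
        sq_nonneg (A 1 0), sq_nonneg (A 2 0), sq_nonneg (A 2 1)]
  obtain ⟨j, i, hji⟩ := hne
  apply hji
  fin_cases j <;> fin_cases i <;>
    simp [hz.1, hz.2.1, hz.2.2.1, hz.2.2.2.1, hz.2.2.2.2.1, hz.2.2.2.2.2, h01, h02, h12]

end BAux

/-- At a zero `p` of finite order `m ≥ 1` of a weak Beltrami field whose proportionality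
function is `C^∞`-bounded near the zero set: there is a multi-index `β` with `|β| = m - 1`
and a component `j` whose gradient `∇(∂^β X^j)(p)` is nonzero, and for any such `β` the
Jacobian matrix of `∂^β X` at `p` has rank at least two. -/
theorem jacobian_rank_ge_two_at_finite_order_zero (U : Set E3) (hU : IsOpen U)
    (X : E3 → E3) (lam : E3 → ℝ) (hX : IsWeakBeltrami X lam U)
    (hlam : CInftyBoundedNear lam U {p ∈ U | X p = 0})
    (p : E3) (hp : p ∈ U) (m : ℕ) (hm : 1 ≤ m) (hord : ZeroOfOrder X p m) :
    (∃ β : Fin 3 → ℕ, msize β = m - 1 ∧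
        ∃ j : Fin 3, ∃ i : Fin 3, pd i (mderiv β (fun y => X y j)) p ≠ 0) ∧
      (∀ β : Fin 3 → ℕ, msize β = m - 1 →
        (∃ j : Fin 3, ∃ i : Fin 3, pd i (mderiv β (fun y => X y j)) p ≠ 0) →
        2 ≤ (Matrix.of (fun (j i : Fin 3) =>
              pd i (mderiv β (fun y => X y j)) p)).rank) := by
  obtain ⟨hXsm', hlb, hbeltrami, hdiv⟩ := hX
  -- component smoothness
  have hXsm : ∀ j : Fin 3, BAux.Sm (fun y => X y j) U := by
    intro j
    have h1 : ContDiffOn ℝ ((⊤ : ℕ∞) : WithTop ℕ∞) X U := hXsm'.of_le (by simp)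
    exact ((EuclideanSpace.proj (𝕜 := ℝ) j).contDiff.comp_contDiffOn h1 : )
  -- p is a zero of X
  have hXpz : X p = 0 := by
    ext j
    exact hord.1 0 (by unfold msize; simp; omega) j
  obtain ⟨V, hV, hVU, hbds⟩ := hlam p ⟨hp, hXpz⟩
  -- the open set Ω where X ≠ 0, inside interior V
  set Ω : Set E3 := interior V ∩ {x ∈ U | X x ≠ 0} with hΩdef
  have hUKopen : IsOpen {x ∈ U | X x ≠ 0} := by
    have he : {x ∈ U | X x ≠ 0} = U ∩ X ⁻¹' ({0}ᶜ) := by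
      ext y; simp [Set.mem_setOf_eq]
    rw [he]
    exact hXsm'.continuousOn.isOpen_inter_preimage hU isOpen_compl_singleton
  have hΩopen : IsOpen Ω := isOpen_interior.inter hUKopen
  have hΩsubU : Ω ⊆ U := fun x hx => hx.2.1
  have hΩVK : Ω ⊆ V \ {q ∈ U | X q = 0} := by
    rintro x ⟨hxV, hxU, hxX⟩
    exact ⟨interior_subset hxV, fun hk => hxX hk.2⟩
  -- smoothness of lam on Ω
  have hcurl0 : BAux.Sm (fun y => vcurl X y 0) U := by
    have he : (fun y => vcurl X y 0)
        = fun y => pd 1 (fun z => X z 2) y - pd 2 (fun z => X z 1) y := by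
      funext y; simp [vcurl]
    rw [he]
    exact (BAux.pd_smooth hU (hXsm 2) 1).sub (BAux.pd_smooth hU (hXsm 1) 2)
  have hcurl1 : BAux.Sm (fun y => vcurl X y 1) U := by
    have he : (fun y => vcurl X y 1)
        = fun y => pd 2 (fun z => X z 0) y - pd 0 (fun z => X z 2) y := by
      funext y; simp [vcurl]
    rw [he]
    exact (BAux.pd_smooth hU (hXsm 0) 2).sub (BAux.pd_smooth hU (hXsm 2) 0)
  have hcurl2 : BAux.Sm (fun y => vcurl X y 2) U := by
    have he : (fun y => vcurl X y 2)
        = fun y => pd 0 (fun z => X z 1) y - pd 1 (fun z => X z 0) y := by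
      funext y; simp [vcurl]
    rw [he]
    exact (BAux.pd_smooth hU (hXsm 1) 0).sub (BAux.pd_smooth hU (hXsm 0) 1)
  have hcurlsm : ∀ l : Fin 3, BAux.Sm (fun y => vcurl X y l) U := by
    intro l
    fin_cases l
    exacts [hcurl0, hcurl1, hcurl2]
  have hlamsm : BAux.Sm lam Ω := by
    intro x hx
    obtain ⟨hxV, hxU, hxX⟩ := hx
    obtain ⟨j, hj⟩ : ∃ j, X x j ≠ 0 := by
      by_contra h; push_neg at h; exact hxX (by ext i; simpa using h i)
    set N : Set E3 := {y ∈ U | X y j ≠ 0} with hNdef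
    have hNopen : IsOpen N := by
      have he : N = U ∩ (fun y => X y j) ⁻¹' ({0}ᶜ) := by
        ext y; simp [hNdef, Set.mem_setOf_eq]
      rw [he]
      exact (hXsm j).continuousOn.isOpen_inter_preimage hU isOpen_compl_singleton
    have hq : ContDiffOn ℝ ((⊤ : ℕ∞) : WithTop ℕ∞)
        (fun y => vcurl X y j / X y j) N := by
      refine ContDiffOn.div ((hcurlsm j).mono fun y hy => hy.1)
        ((hXsm j).mono fun y hy => hy.1) fun y hy => hy.2
    have hlamN : ContDiffOn ℝ ((⊤ : ℕ∞) : WithTop ℕ∞) lam N := by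
      refine hq.congr fun y hy => ?_
      rw [hbeltrami y hy.1 j, mul_div_assoc, div_self hy.2, mul_one]
    exact (hlamN.contDiffAt (hNopen.mem_nhds ⟨hxU, hj⟩)).contDiffWithinAt
  -- p is in the closure of Ω (else X vanishes on a neighbourhood of p)
  have hpc : p ∈ closure Ω := by
    by_contra hpc
    obtain ⟨β₁, hβ₁, j, hj⟩ := hord.2
    apply hj
    have hNo : IsOpen ((closure Ω)ᶜ ∩ interior V ∩ U) :=
      (isClosed_closure.isOpen_compl.inter isOpen_interior).inter hU
    have hpN : p ∈ (closure Ω)ᶜ ∩ interior V ∩ U :=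
      ⟨⟨hpc, mem_interior_iff_mem_nhds.mpr hV⟩, hp⟩
    have hEq : EqOn (fun y => X y j) (fun _ => (0:ℝ)) ((closure Ω)ᶜ ∩ interior V ∩ U) := by
      rintro y ⟨⟨hy1, hy2⟩, hy3⟩
      by_contra hXy
      exact hy1 (subset_closure ⟨hy2, hy3, fun h0 => hXy (by show X y j = 0; rw [h0]; rfl)⟩)
    calc mderiv β₁ (fun y => X y j) p = mderiv β₁ (fun _ => (0:ℝ)) p :=
          BAux.mderiv_congr_on hNo hEq β₁ hpN
      _ = 0 := by rw [BAux.mderiv_zero_fun]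
  have hneBot : (nhdsWithin p Ω).NeBot := mem_closure_iff_nhdsWithin_neBot.mp hpc
  -- hard core: derivatives of order ≤ m-1 of vcurl vanish at p
  have hHC : ∀ (l : Fin 3) (β : Fin 3 → ℕ), msize β ≤ m - 1 →
      mderiv β (fun y => vcurl X y l) p = 0 := by
    intro l β hβ
    have hbd : ∀ γ : Fin 3 → ℕ, ∃ C : ℝ, ∀ x ∈ Ω, |mderiv γ lam x| ≤ C := by
      intro γ
      obtain ⟨C, hC⟩ := hbds γ
      exact ⟨C, fun x hx => hC x (hΩVK hx)⟩
    have hFlim : ∀ δ : Fin 3 → ℕ, msize δ ≤ m - 1 →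
        Tendsto (mderiv δ (fun y => X y l)) (nhdsWithin p Ω) (nhds 0) := by
      intro δ hδ
      have hcont : ContinuousOn (mderiv δ (fun y => X y l)) U :=
        (BAux.mderiv_smooth hU (hXsm l) δ).continuousOn
      have h0 : mderiv δ (fun y => X y l) p = 0 := hord.1 δ (by omega) l
      have ht := (hcont p hp).tendsto
      rw [h0] at ht
      exact ht.mono_left (nhdsWithin_mono p hΩsubU)
    have hT := BAux.key_tendsto hΩopen p lam (fun y => X y l) (m - 1) hlamsm
      ((hXsm l).mono hΩsubU) hbd hFlim (msize β) β 0 0 rfl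
      (by unfold msize at hβ ⊢; simp; omega)
    have hT' : Tendsto (fun x => mderiv β (fun y => lam y * X y l) x)
        (nhdsWithin p Ω) (nhds 0) := hT
    have hEqU : EqOn (mderiv β (fun y => vcurl X y l))
        (mderiv β (fun y => lam y * X y l)) U :=
      BAux.mderiv_congr_on hU (fun y hy => by rw [hbeltrami y hy l]) β
    have hcont2 : Tendsto (mderiv β (fun y => vcurl X y l)) (nhdsWithin p Ω)
        (nhds (mderiv β (fun y => vcurl X y l) p)) :=
      (((BAux.mderiv_smooth hU (hcurlsm l) β).continuousOn p hp).tendsto).mono_left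
        (nhdsWithin_mono p hΩsubU)
    have hzero : Tendsto (mderiv β (fun y => vcurl X y l)) (nhdsWithin p Ω) (nhds 0) := by
      apply hT'.congr'
      filter_upwards [self_mem_nhdsWithin] with x hx
      exact (hEqU (hΩsubU hx)).symm
    exact tendsto_nhds_unique hcont2 hzero
  -- trace identity
  have htrace : ∀ β : Fin 3 → ℕ,
      pd 0 (mderiv β (fun y => X y 0)) p + pd 1 (mderiv β (fun y => X y 1)) p
        + pd 2 (mderiv β (fun y => X y 2)) p = 0 := by
    intro β
    have c0 := BAux.pd_mderiv_comm hU (hXsm 0) 0 β hp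
    have c1 := BAux.pd_mderiv_comm hU (hXsm 1) 1 β hp
    have c2 := BAux.pd_mderiv_comm hU (hXsm 2) 2 β hp
    rw [c0, c1, c2]
    have s0 : BAux.Sm (pd 0 (fun y => X y 0)) U := BAux.pd_smooth hU (hXsm 0) 0
    have s1 : BAux.Sm (pd 1 (fun y => X y 1)) U := BAux.pd_smooth hU (hXsm 1) 1
    have s2 : BAux.Sm (pd 2 (fun y => X y 2)) U := BAux.pd_smooth hU (hXsm 2) 2
    have a1 : mderiv β (fun y => pd 0 (fun z => X z 0) y + pd 1 (fun z => X z 1) y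
        + pd 2 (fun z => X z 2) y) p
        = mderiv β (fun y => pd 0 (fun z => X z 0) y + pd 1 (fun z => X z 1) y) p
          + mderiv β (pd 2 (fun z => X z 2)) p :=
      BAux.mderiv_add_on hU (s0.add s1) s2 β hp
    have a2 : mderiv β (fun y => pd 0 (fun z => X z 0) y + pd 1 (fun z => X z 1) y) p
        = mderiv β (pd 0 (fun z => X z 0)) p + mderiv β (pd 1 (fun z => X z 1)) p :=
      BAux.mderiv_add_on hU s0 s1 β hp
    have hEq0 : EqOn (fun y => pd 0 (fun z => X z 0) y + pd 1 (fun z => X z 1) y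
        + pd 2 (fun z => X z 2) y) (fun _ => (0:ℝ)) U := fun y hy => hdiv y hy
    have hz : mderiv β (fun y => pd 0 (fun z => X z 0) y + pd 1 (fun z => X z 1) y
        + pd 2 (fun z => X z 2) y) p = 0 := by
      rw [BAux.mderiv_congr_on hU hEq0 β hp, BAux.mderiv_zero_fun]
    linarith [hz, a1, a2]
  -- curl identities
  have hcurlid : ∀ β : Fin 3 → ℕ, msize β ≤ m - 1 →
      (pd 1 (mderiv β (fun y => X y 2)) p = pd 2 (mderiv β (fun y => X y 1)) p) ∧
      (pd 2 (mderiv β (fun y => X y 0)) p = pd 0 (mderiv β (fun y => X y 2)) p) ∧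
      (pd 0 (mderiv β (fun y => X y 1)) p = pd 1 (mderiv β (fun y => X y 0)) p) := by
    intro β hβ
    refine ⟨?_, ?_, ?_⟩
    · have e1 := BAux.pd_mderiv_comm hU (hXsm 2) 1 β hp
      have e2 := BAux.pd_mderiv_comm hU (hXsm 1) 2 β hp
      have e3 := BAux.mderiv_sub_on hU (BAux.pd_smooth hU (hXsm 2) 1)
        (BAux.pd_smooth hU (hXsm 1) 2) β hp
      have e4 : (fun y => pd 1 (fun z => X z 2) y - pd 2 (fun z => X z 1) y)
          = fun y => vcurl X y 0 := by funext y; simp [vcurl]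
      have e3' : mderiv β (fun y => vcurl X y 0) p
          = mderiv β (pd 1 (fun z => X z 2)) p
            - mderiv β (pd 2 (fun z => X z 1)) p := by
        rw [e4] at e3; exact e3
      have hv := hHC 0 β hβ
      rw [e1, e2]
      linarith [hv, e3']
    · have e1 := BAux.pd_mderiv_comm hU (hXsm 0) 2 β hp
      have e2 := BAux.pd_mderiv_comm hU (hXsm 2) 0 β hp
      have e3 := BAux.mderiv_sub_on hU (BAux.pd_smooth hU (hXsm 0) 2)
        (BAux.pd_smooth hU (hXsm 2) 0) β hp
      have e4 : (fun y => pd 2 (fun z => X z 0) y - pd 0 (fun z => X z 2) y)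
          = fun y => vcurl X y 1 := by funext y; simp [vcurl]
      have e3' : mderiv β (fun y => vcurl X y 1) p
          = mderiv β (pd 2 (fun z => X z 0)) p
            - mderiv β (pd 0 (fun z => X z 2)) p := by
        rw [e4] at e3; exact e3
      have hv := hHC 1 β hβ
      rw [e1, e2]
      linarith [hv, e3']
    · have e1 := BAux.pd_mderiv_comm hU (hXsm 1) 0 β hp
      have e2 := BAux.pd_mderiv_comm hU (hXsm 0) 1 β hp
      have e3 := BAux.mderiv_sub_on hU (BAux.pd_smooth hU (hXsm 1) 0)
        (BAux.pd_smooth hU (hXsm 0) 1) β hp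
      have e4 : (fun y => pd 0 (fun z => X z 1) y - pd 1 (fun z => X z 0) y)
          = fun y => vcurl X y 2 := by funext y; simp [vcurl]
      have e3' : mderiv β (fun y => vcurl X y 2) p
          = mderiv β (pd 0 (fun z => X z 1)) p
            - mderiv β (pd 1 (fun z => X z 0)) p := by
        rw [e4] at e3; exact e3
      have hv := hHC 2 β hβ
      rw [e1, e2]
      linarith [hv, e3']
  constructor
  · -- existence of β of size m-1 with nonzero gradient entry
    obtain ⟨β₁, hβ₁, j, hj⟩ := hord.2
    by_cases h0 : β₁ 0 = 0
    · by_cases h1 : β₁ 1 = 0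
      · obtain ⟨k, hk⟩ : ∃ k, β₁ 2 = k + 1 := ⟨β₁ 2 - 1, by unfold msize at hβ₁; omega⟩
        refine ⟨Function.update β₁ 2 k, ?_, j, 2, ?_⟩
        · unfold msize at hβ₁ ⊢
          simp only [Function.update_apply]
          norm_num [Fin.ext_iff]
          omega
        · rw [← BAux.mderiv_outer2 β₁ k h0 h1 hk]
          exact hj
      · obtain ⟨k, hk⟩ : ∃ k, β₁ 1 = k + 1 := ⟨β₁ 1 - 1, by omega⟩
        refine ⟨Function.update β₁ 1 k, ?_, j, 1, ?_⟩
        · unfold msize at hβ₁ ⊢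
          simp only [Function.update_apply]
          norm_num [Fin.ext_iff]
          omega
        · rw [← BAux.mderiv_outer1 β₁ k h0 hk]
          exact hj
    · obtain ⟨k, hk⟩ : ∃ k, β₁ 0 = k + 1 := ⟨β₁ 0 - 1, by omega⟩
      refine ⟨Function.update β₁ 0 k, ?_, j, 0, ?_⟩
      · unfold msize at hβ₁ ⊢
        simp only [Function.update_apply]
        norm_num [Fin.ext_iff]
        omega
      · rw [← BAux.mderiv_outer0 β₁ k hk]
        exact hj
  · -- rank at least two
    intro β hβ hne
    have hβle : msize β ≤ m - 1 := le_of_eq hβ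
    obtain ⟨hc0, hc1, hc2⟩ := hcurlid β hβle
    apply BAux.rank_two_of_symm_traceless
    · exact hc2.symm
    · exact hc1
    · exact hc0.symm
    · exact htrace β
    · exact hne
end
end

section
/- Let X be a second-countable metric space, μ a finite measure on the Borel σ-algebra of X, and φ : ℝ × X → X a jointly continuous flow (φ(0,p) = p and φ(s+t,p) = φ(s,φ(t,p)) for all s,t ∈ ℝ, p ∈ X) such that for every t ∈ ℝ the map φ(t,·) preserves μ. Then for μ-almost every p ∈ X there exist sequences tₙ → +∞ and sₙ → −∞ with φ(tₙ,p) → p and φ(sₙ,p) → p; that is, p lies in both the ω-limit set and the α-limit set of its own orbit. -/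
/-!
A time-`c` map of a measure preserving flow on a finite measure space is conservative, so by
Poincaré recurrence almost every point returns to each of its neighbourhoods at infinitely many
times `n * c` with `n : ℕ`. Taking `c = 1` and `c = -1` gives returns as `t → +∞` and `t → -∞`.
-/

open Filter Topology MeasureTheory

theorem MeasureTheory.Conservative.ae_exists_strictMono_tendsto_iterate {α : Type*}
    [TopologicalSpace α] [SecondCountableTopology α] [MeasurableSpace α]
    [OpensMeasurableSpace α] {f : α → α} {μ : Measure α} (hf : Conservative f μ) :
    ∀ᵐ x ∂μ, ∃ ψ : ℕ → ℕ, StrictMono ψ ∧ Tendsto (fun n => f^[ψ n] x) atTop (𝓝 x) := by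
  filter_upwards [hf.ae_frequently_mem_of_mem_nhds] with x hx
  exact (mapClusterPt_iff_frequently.2 hx).tendsto_subseq

theorem iterate_flow_apply {X : Type*} (φ : ℝ × X → X) (h0 : ∀ p : X, φ (0, p) = p)
    (hadd : ∀ s t : ℝ, ∀ p : X, φ (s + t, p) = φ (s, φ (t, p))) (c : ℝ) (n : ℕ) (p : X) :
    (fun q => φ (c, q))^[n] p = φ (n * c, p) := by
  induction n with
  | zero => simp [h0]
  | succ n ih => rw [Function.iterate_succ_apply', ih, ← hadd, Nat.cast_succ, add_one_mul, add_comm]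

theorem ae_exists_tendsto_flow_natCast_mul {X : Type*} [TopologicalSpace X]
    [SecondCountableTopology X] [MeasurableSpace X] [OpensMeasurableSpace X]
    (μ : Measure X) [IsFiniteMeasure μ] (φ : ℝ × X → X) (h0 : ∀ p : X, φ (0, p) = p)
    (hadd : ∀ s t : ℝ, ∀ p : X, φ (s + t, p) = φ (s, φ (t, p))) (c : ℝ)
    (hc : MeasurePreserving (fun p => φ (c, p)) μ μ) :
    ∀ᵐ p ∂μ, ∃ m : ℕ → ℕ, Tendsto m atTop atTop ∧
      Tendsto (fun n => φ (m n * c, p)) atTop (𝓝 p) := by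
  filter_upwards [hc.conservative.ae_exists_strictMono_tendsto_iterate] with p ⟨m, hm, hlim⟩
  simp only [iterate_flow_apply φ h0 hadd] at hlim
  exact ⟨m, hm.tendsto_atTop, hlim⟩

theorem ae_mem_omega_and_alpha_limit_of_flow_general
    {X : Type*} [MetricSpace X] [SecondCountableTopology X]
    [MeasurableSpace X] [BorelSpace X]
    (μ : Measure X) [IsFiniteMeasure μ]
    (φ : ℝ × X → X)
    (h0 : ∀ p : X, φ (0, p) = p)
    (hadd : ∀ s t : ℝ, ∀ p : X, φ (s + t, p) = φ (s, φ (t, p)))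
    (hpres : ∀ t : ℝ, MeasurePreserving (fun p => φ (t, p)) μ μ) :
    ∀ᵐ p ∂μ,
      (∃ t : ℕ → ℝ, Tendsto t atTop atTop ∧
          Tendsto (fun n => φ (t n, p)) atTop (𝓝 p)) ∧
      (∃ s : ℕ → ℝ, Tendsto s atTop atBot ∧
          Tendsto (fun n => φ (s n, p)) atTop (𝓝 p)) := by
  filter_upwards [ae_exists_tendsto_flow_natCast_mul μ φ h0 hadd 1 (hpres 1),
    ae_exists_tendsto_flow_natCast_mul μ φ h0 hadd (-1) (hpres (-1))]
    with p ⟨m, hm, hfwd⟩ ⟨m', hm', hbwd⟩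
  simp only [mul_one, mul_neg_one] at hfwd hbwd
  exact ⟨⟨_, tendsto_natCast_atTop_atTop.comp hm, hfwd⟩,
    ⟨_, tendsto_neg_atBot_iff.2 (tendsto_natCast_atTop_atTop.comp hm'), hbwd⟩⟩

/-- Poincaré recurrence for two-sided flows: if `φ` is a jointly continuous measure
preserving flow on a second-countable metric space equipped with a finite Borel measure
`μ`, then `μ`-almost every point `p` lies in both its own `ω`-limit set and its own
`α`-limit set: there are sequences `tₙ → +∞` and `sₙ → -∞` along which the orbit of `p`
returns to `p`. -/
theorem ae_mem_omega_and_alpha_limit_of_flow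
    {X : Type*} [MetricSpace X] [SecondCountableTopology X]
    [MeasurableSpace X] [BorelSpace X]
    (μ : Measure X) [IsFiniteMeasure μ]
    (φ : ℝ × X → X) (hcont : Continuous φ)
    (h0 : ∀ p : X, φ (0, p) = p)
    (hadd : ∀ s t : ℝ, ∀ p : X, φ (s + t, p) = φ (s, φ (t, p)))
    (hpres : ∀ t : ℝ, MeasurePreserving (fun p => φ (t, p)) μ μ) :
    ∀ᵐ p ∂μ,
      (∃ t : ℕ → ℝ, Tendsto t atTop atTop ∧
          Tendsto (fun n => φ (t n, p)) atTop (𝓝 p)) ∧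
      (∃ s : ℕ → ℝ, Tendsto s atTop atBot ∧
          Tendsto (fun n => φ (s n, p)) atTop (𝓝 p)) :=
  ae_mem_omega_and_alpha_limit_of_flow_general μ φ h0 hadd hpres
end
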